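/- arXiv:math/0611448 — 8 statements merged into one kernel-verified Lean document; each statement's English description precedes it below -/
import Mathlib

section
/- Assume k ≥ 2. For every isomorphism A of the 0-model 𝒱 there exist a permutation σ of {1,…,k} and real constants a₀ and b₁,…,b_k satisfying |a₀|·b_i² = 1 for every i (in particular a₀ ≠ 0 and b_i ≠ 0), such that: A U₀ − a₀ U₀ ∈ A_V; for each 1 ≤ i ≤ k, A U_i − b_i U_{σ(i)} ∈ A_{S,V}; and for each 1 ≤ i ≤ k, A S_i − sign(a₀) S_{σ(i)} ∈ A_V. -/
open Finset

/-- Index type for the distinguished basis of `V = ℝ^{3k+2}`: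
`Sum.inl i ↔ U_i` (0 ≤ i ≤ k), `Sum.inr (Sum.inl i) ↔ V_i` (0 ≤ i ≤ k),
`Sum.inr (Sum.inr i) ↔ S_{i+1}` (1 ≤ i+1 ≤ k). -/
abbrev Idx (k : ℕ) := Fin (k+1) ⊕ (Fin (k+1) ⊕ Fin k)

abbrev Model (k : ℕ) := Idx k → ℝ

/-- The distinguished basis vector `U_i`. -/
def U (k : ℕ) (i : Fin (k+1)) : Model k := Pi.single (Sum.inl i) 1

/-- The distinguished basis vector `V_i`. -/
def Vb (k : ℕ) (i : Fin (k+1)) : Model k := Pi.single (Sum.inr (Sum.inl i)) 1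

/-- The distinguished basis vector `S_{i+1}`. -/
def S (k : ℕ) (i : Fin k) : Model k := Pi.single (Sum.inr (Sum.inr i)) 1

/-- The inner product `(·,·)` with `(U_0,V_0) = (U_i,V_i) = 1`, `(S_i,S_i) = ε_i`. -/
def ip (k : ℕ) (ε : Fin k → ℝ) (x y : Model k) : ℝ :=
  (∑ i : Fin (k+1),
    (x (Sum.inl i) * y (Sum.inr (Sum.inl i)) + x (Sum.inr (Sum.inl i)) * y (Sum.inl i)))
  + ∑ i : Fin k, ε i * x (Sum.inr (Sum.inr i)) * y (Sum.inr (Sum.inr i))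

/-- `A_i(x,y) = x_{U_0} y_{U_i} - x_{U_i} y_{U_0}`. -/
def Af (k : ℕ) (i : Fin k) (x y : Model k) : ℝ :=
  x (Sum.inl 0) * y (Sum.inl i.succ) - x (Sum.inl i.succ) * y (Sum.inl 0)

/-- `B_i(x,y) = x_{U_i} y_{S_i} - x_{S_i} y_{U_i}`. -/
def Bf (k : ℕ) (i : Fin k) (x y : Model k) : ℝ :=
  x (Sum.inl i.succ) * y (Sum.inr (Sum.inr i)) - x (Sum.inr (Sum.inr i)) * y (Sum.inl i.succ)

/-- The algebraic curvature tensor `R` of the 0-model. -/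
def Rt (k : ℕ) (x y z w : Model k) : ℝ :=
  ∑ i : Fin k, (Af k i x y * Bf k i z w + Bf k i x y * Af k i z w)

/-- `A_V = ker R`. -/
def AV (k : ℕ) : Set (Model k) := {ξ | ∀ x y z, Rt k ξ x y z = 0}

/-- `A_{S,V} = A_V^⊥`. -/
def ASV (k : ℕ) (ε : Fin k → ℝ) : Set (Model k) := {η | ∀ ξ ∈ AV k, ip k ε η ξ = 0}

section helpers
variable {k : ℕ}

lemma U_inl_zero : U k 0 (Sum.inl 0) = 1 := by simp [U]
lemma U_zero_inl_succ (m : Fin k) : U k 0 (Sum.inl m.succ) = 0 := by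
  rw [U]; exact Pi.single_eq_of_ne (fun h => Fin.succ_ne_zero m (Sum.inl.inj h)) 1
lemma U_succ_inl_zero (i : Fin k) : U k i.succ (Sum.inl 0) = 0 := by
  rw [U]; exact Pi.single_eq_of_ne (fun h => Fin.succ_ne_zero i (Sum.inl.inj h).symm) 1
lemma U_succ_inl_succ (i m : Fin k) : U k i.succ (Sum.inl m.succ) = if m = i then 1 else 0 := by
  rcases eq_or_ne m i with h | h
  · subst h; simp [U, Pi.single_eq_same]
  · rw [if_neg h, U]
    exact Pi.single_eq_of_ne (fun h' => h (Fin.succ_injective _ (Sum.inl.inj h'))) 1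
lemma U_inr (i : Fin (k+1)) (x : Fin (k+1) ⊕ Fin k) : U k i (Sum.inr x) = 0 := by
  rw [U]; exact Pi.single_eq_of_ne (by simp) 1
lemma S_inl (i : Fin k) (m : Fin (k+1)) : S k i (Sum.inl m) = 0 := by
  rw [S]; exact Pi.single_eq_of_ne (by simp) 1
lemma S_inrl (i : Fin k) (m : Fin (k+1)) : S k i (Sum.inr (Sum.inl m)) = 0 := by
  rw [S]; exact Pi.single_eq_of_ne (by simp) 1
lemma S_inrr (i m : Fin k) : S k i (Sum.inr (Sum.inr m)) = if m = i then 1 else 0 := by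
  rcases eq_or_ne m i with h | h
  · subst h; simp [S, Pi.single_eq_same]
  · rw [if_neg h, S]
    exact Pi.single_eq_of_ne (by simp [h]) 1
lemma Vb_inl (i m : Fin (k+1)) : Vb k i (Sum.inl m) = 0 := by
  rw [Vb]; exact Pi.single_eq_of_ne (by simp) 1
lemma Vb_inrl (i m : Fin (k+1)) : Vb k i (Sum.inr (Sum.inl m)) = if m = i then 1 else 0 := by
  rcases eq_or_ne m i with h | h
  · subst h; simp [Vb, Pi.single_eq_same]
  · rw [if_neg h, Vb]
    exact Pi.single_eq_of_ne (by simp [h]) 1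
lemma Vb_inrr (i : Fin (k+1)) (m : Fin k) : Vb k i (Sum.inr (Sum.inr m)) = 0 := by
  rw [Vb]; exact Pi.single_eq_of_ne (by simp) 1

/-- vectors supported on the `V_j` are in `A_V`. -/
lemma mem_AV_of (ξ : Model k) (h1 : ∀ m : Fin (k+1), ξ (Sum.inl m) = 0)
    (h2 : ∀ m : Fin k, ξ (Sum.inr (Sum.inr m)) = 0) : ξ ∈ AV k := by
  intro x y z
  refine Finset.sum_eq_zero fun m _ => ?_
  simp [Af, Bf, h1, h2]

lemma AV_inrr (ξ : Model k) (hξ : ξ ∈ AV k) (i : Fin k) : ξ (Sum.inr (Sum.inr i)) = 0 := by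
  have h := hξ (U k i.succ) (U k 0) (U k i.succ)
  rw [Rt, Fintype.sum_eq_single i (fun m hm => by
    simp [Af, Bf, U_inl_zero, U_zero_inl_succ, U_succ_inl_zero, U_succ_inl_succ, U_inr, hm])] at h
  simp [Af, Bf, U_inl_zero, U_zero_inl_succ, U_succ_inl_zero, U_succ_inl_succ, U_inr] at h
  exact h

lemma AV_inl_succ (ξ : Model k) (hξ : ξ ∈ AV k) (i : Fin k) : ξ (Sum.inl i.succ) = 0 := by
  have h := hξ (S k i) (U k 0) (U k i.succ)
  rw [Rt, Fintype.sum_eq_single i (fun m hm => by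
    simp [Af, Bf, U_inl_zero, U_zero_inl_succ, U_succ_inl_zero, U_succ_inl_succ, U_inr,
      S_inl, S_inrr, hm])] at h
  simp [Af, Bf, U_inl_zero, U_zero_inl_succ, U_succ_inl_zero, U_succ_inl_succ, U_inr,
    S_inl, S_inrr] at h
  exact h

lemma AV_inl_zero (hk : 0 < k) (ξ : Model k) (hξ : ξ ∈ AV k) : ξ (Sum.inl 0) = 0 := by
  set i : Fin k := ⟨0, hk⟩
  have h := hξ (U k i.succ) (U k i.succ) (S k i)
  rw [Rt, Fintype.sum_eq_single i (fun m hm => by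
    simp [Af, Bf, U_inl_zero, U_zero_inl_succ, U_succ_inl_zero, U_succ_inl_succ, U_inr,
      S_inl, S_inrr, hm])] at h
  simp [Af, Bf, U_inl_zero, U_zero_inl_succ, U_succ_inl_zero, U_succ_inl_succ, U_inr,
    S_inl, S_inrr, AV_inrr ξ hξ] at h
  exact h

lemma mem_ASV_of (hk : 0 < k) (ε : Fin k → ℝ) (η : Model k)
    (h : ∀ m : Fin (k+1), η (Sum.inl m) = 0) : η ∈ ASV k ε := by
  intro ξ hξ
  have h0 : ∀ m : Fin (k+1), ξ (Sum.inl m) = 0 := by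
    intro m
    refine Fin.cases (AV_inl_zero hk ξ hξ) (fun i => AV_inl_succ ξ hξ i) m
  rw [ip]
  simp [h, h0, AV_inrr ξ hξ]

end helpers

section rbs
variable {k : ℕ}

lemma Rt_last_S (x y z w : Model k) (hw : ∀ m : Fin (k+1), w (Sum.inl m) = 0) :
    Rt k x y z w = ∑ m, Af k m x y * (z (Sum.inl m.succ) * w (Sum.inr (Sum.inr m))) := by
  refine Finset.sum_congr rfl fun m _ => ?_
  simp only [Af, Bf, hw]
  ring

lemma RB1 (i j l : Fin k) :
    Rt k (U k 0) (U k i.succ) (U k j.succ) (S k l) = if i = j ∧ j = l then 1 else 0 := by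
  rw [Rt_last_S _ _ _ _ (S_inl l)]
  have : ∀ m : Fin k, Af k m (U k 0) (U k i.succ) * (U k j.succ (Sum.inl m.succ)
      * S k l (Sum.inr (Sum.inr m)))
      = if m = i then (if m = j then 1 else 0) * (if m = l then 1 else 0) else 0 := by
    intro m
    simp [Af, U_inl_zero, U_zero_inl_succ, U_succ_inl_zero, U_succ_inl_succ, S_inrr]
    split_ifs <;> simp_all
  rw [Finset.sum_congr rfl fun m _ => this m, Finset.sum_ite_eq' univ i]
  simp only [mem_univ, if_true]
  split_ifs <;> simp_all

lemma RB2 (i l : Fin k) : Rt k (U k 0) (U k i.succ) (U k 0) (S k l) = 0 := by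
  rw [Rt_last_S _ _ _ _ (S_inl l)]
  refine Finset.sum_eq_zero fun m _ => ?_
  rw [U_zero_inl_succ]
  ring

lemma RB3 (i j l p : Fin k) :
    Rt k (U k i.succ) (U k j.succ) (U k l.succ) (S k p) = 0 := by
  rw [Rt_last_S _ _ _ _ (S_inl p)]
  refine Finset.sum_eq_zero fun m _ => ?_
  simp [Af, U_succ_inl_zero]

lemma RB4 (j l : Fin k) : Rt k (U k 0) (U k j.succ) (U k 0) (U k l.succ) = 0 := by
  refine Finset.sum_eq_zero fun m _ => ?_
  simp [Af, Bf, U_inl_zero, U_zero_inl_succ, U_succ_inl_zero, U_succ_inl_succ, U_inr]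

lemma RBip (ε : Fin k → ℝ) (i j : Fin k) :
    ip k ε (S k i) (S k j) = if i = j then ε i else 0 := by
  rw [ip]
  have h1 : ∀ m : Fin (k+1), S k i (Sum.inl m) * S k j (Sum.inr (Sum.inl m))
      + S k i (Sum.inr (Sum.inl m)) * S k j (Sum.inl m) = 0 := by
    intro m; simp [S_inl, S_inrl]
  rw [Finset.sum_congr rfl fun m _ => h1 m]
  have h2 : ∀ m : Fin k, ε m * S k i (Sum.inr (Sum.inr m)) * S k j (Sum.inr (Sum.inr m))
      = if m = i then (if m = j then ε m else 0) else 0 := by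
    intro m
    simp [S_inrr]
    split_ifs <;> ring
  rw [Finset.sum_congr rfl fun m _ => h2 m, Finset.sum_ite_eq' univ i]
  simp

lemma ip_Vb (ε : Fin k → ℝ) (x : Model k) (m : Fin (k+1)) :
    ip k ε x (Vb k m) = x (Sum.inl m) := by
  rw [ip]
  have h2 : ∀ i : Fin k, ε i * x (Sum.inr (Sum.inr i)) * Vb k m (Sum.inr (Sum.inr i)) = 0 := by
    intro i; rw [Vb_inrr]; ring
  rw [Finset.sum_congr rfl fun i _ => h2 i, Finset.sum_const_zero, add_zero]
  have h1 : ∀ i : Fin (k+1), x (Sum.inl i) * Vb k m (Sum.inr (Sum.inl i))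
      + x (Sum.inr (Sum.inl i)) * Vb k m (Sum.inl i)
      = if i = m then x (Sum.inl i) else 0 := by
    intro i
    rw [Vb_inrl, Vb_inl]
    split_ifs <;> ring
  rw [Finset.sum_congr rfl fun i _ => h1 i, Finset.sum_ite_eq' univ m]
  simp

lemma ip_S_AV (ε : Fin k → ℝ) (i : Fin k) (ξ : Model k) (hξ : ξ ∈ AV k) :
    ip k ε (S k i) ξ = 0 := by
  rw [ip]
  simp [S_inl, S_inrl, S_inrr, AV_inrr ξ hξ]

end rbs

lemma inv_trick {k : ℕ} (Pf Mf : Fin k → Fin k → ℝ)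
    (h : ∀ i j, ∑ m, Pf m i * Mf m j = if i = j then 1 else 0) :
    ∀ w : Fin k → ℝ, (∀ i, ∑ m, Pf m i * w m = 0) → ∀ m, w m = 0 := by
  intro w hw m
  set A1 : Matrix (Fin k) (Fin k) ℝ := Matrix.of fun i m => Pf m i with hA1
  set A2 : Matrix (Fin k) (Fin k) ℝ := Matrix.of fun m j => Mf m j with hA2
  have h12 : A1 * A2 = 1 := by
    ext i j
    simpa [Matrix.mul_apply, hA1, hA2, Matrix.one_apply] using h i j
  have h21 : A2 * A1 = 1 := mul_eq_one_comm.mp h12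
  have e1 : w m = ∑ m', (A2 * A1) m m' * w m' := by
    rw [h21]; simp [Matrix.one_apply]
  rw [e1]
  have : ∀ m', (A2 * A1) m m' * w m' = ∑ i, Mf m i * (Pf m' i * w m') := by
    intro m'
    rw [Matrix.mul_apply, Finset.sum_mul]
    exact Finset.sum_congr rfl fun i _ => by simp [hA1, hA2]; ring
  rw [Finset.sum_congr rfl fun m' _ => this m', Finset.sum_comm]
  refine Finset.sum_eq_zero fun i _ => ?_
  rw [← Finset.mul_sum, hw i, mul_zero]

lemma key_algebra (k : ℕ) (hk : 2 ≤ k) (ε : Fin k → ℝ) (hε : ∀ i, ε i = 1 ∨ ε i = -1)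
    (a0 : ℝ) (a c0 al : Fin k → ℝ) (c d P Bg : Fin k → Fin k → ℝ)
    (hPdef : ∀ m i, P m i = a0 * c m i - a m * c0 i)
    (E1 : ∀ i j l, ∑ m, P m i * (c m j * d m l) = if i = j ∧ j = l then 1 else 0)
    (E7 : ∀ i l, ∑ m, P m i * (a m * d m l) = 0)
    (E3 : ∀ i j l p, ∑ m, (c0 i * c m j - c m i * c0 j) * (c m l * d m p) = 0)
    (E6 : ∀ j l, ∑ m, (P m j * Bg m l + Bg m j * P m l) = 0)
    (hBg : ∀ m j, ∃ t, Bg m j = a m * t - al m * c m j)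
    (EIP : ∀ i j, ∑ m, ε m * d m i * d m j = if i = j then ε i else 0) :
    ∃ (σ : Equiv.Perm (Fin k)) (b : Fin k → ℝ),
      (∀ i, |a0| * b i ^ 2 = 1) ∧ (∀ m, a m = 0) ∧ (∀ i, c0 i = 0) ∧ (∀ m, al m = 0) ∧
      (∀ m j, m ≠ σ j → c m j = 0) ∧ (∀ j, c (σ j) j = b j) ∧
      (∀ m j, d m j = if m = σ j then Real.sign a0 else 0) := by
  set r : Fin k → ℝ := fun m => ∑ l, d m l with hr
  have hN : ∀ i j, ∑ m, P m i * (r m * c m j) = if i = j then 1 else 0 := by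
    intro i j
    have step : ∑ m, P m i * (r m * c m j) = ∑ l, ∑ m, P m i * (c m j * d m l) := by
      rw [Finset.sum_comm]
      refine Finset.sum_congr rfl fun m _ => ?_
      rw [hr]
      simp only [Finset.sum_mul, Finset.mul_sum]
      exact Finset.sum_congr rfl fun l _ => by ring
    rw [step]
    simp_rw [E1]
    by_cases h : i = j <;> simp [h]
  have hN' : ∀ i j, ∑ m, c m i * (r m * P m j) = if i = j then 1 else 0 := by
    intro i j
    have := hN j i
    rw [show (if j = i then (1:ℝ) else 0) = if i = j then 1 else 0 by simp [eq_comm]] at this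
    rw [← this]
    exact Finset.sum_congr rfl fun m _ => by ring
  have LemA := inv_trick P (fun m j => r m * c m j) hN
  have LemA' := inv_trick c (fun m j => r m * P m j) hN'
  -- F1
  have hF1 : ∀ j l, j ≠ l → ∀ m, c m j * d m l = 0 := by
    intro j l hjl
    refine LemA (fun m => c m j * d m l) (fun i => ?_)
    rw [E1 i j l, if_neg (fun h => hjl h.2)]
  have hF2 : ∀ i l, i ≠ l → ∀ m, P m i * d m l = 0 := by
    intro i l hil
    refine LemA' (fun m => P m i * d m l) (fun j => ?_)
    have := E1 i j l
    rw [if_neg (fun h => hil (h.1.trans h.2))] at this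
    rw [← this]
    exact Finset.sum_congr rfl fun m _ => by ring
  -- rows of d have at most one nonzero
  have hProw : ∀ m l l', l ≠ l' → d m l ≠ 0 → d m l' = 0 := by
    intro m l l' hne hdl
    by_contra hdl'
    have hc : ∀ j, c m j = 0 := by
      intro j
      by_cases hj : j = l
      · subst hj
        exact (mul_eq_zero.mp (hF1 j l' hne m)).resolve_right hdl'
      · exact (mul_eq_zero.mp (hF1 j l hj m)).resolve_right hdl
    have hp : ∀ i, P m i = 0 := by
      intro i
      by_cases hi : i = l
      · subst hi
        exact (mul_eq_zero.mp (hF2 i l' hne m)).resolve_right hdl'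
      · exact (mul_eq_zero.mp (hF2 i l hi m)).resolve_right hdl
    have := LemA (fun m' => if m' = m then (1:ℝ) else 0) (fun i => by
      simp [mul_ite, Finset.sum_ite_eq', hp]) m
    simp at this
  -- every column of d nonzero
  have hcol : ∀ l, ∃ m, d m l ≠ 0 := by
    intro l
    by_contra h
    push_neg at h
    have := EIP l l
    rw [if_pos rfl] at this
    simp [h] at this
    rcases hε l with h' | h' <;> rw [h'] at this <;> norm_num at this
  choose mf hmf using hcol
  have hinj : Function.Injective mf := by
    intro l l' h
    by_contra hne
    have := hProw (mf l) l l' hne (hmf l)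
    rw [h] at this
    exact hmf l' this
  let σ : Equiv.Perm (Fin k) := Equiv.ofBijective mf (Finite.injective_iff_bijective.mp hinj)
  have hσ : ∀ l, σ l = mf l := fun l => rfl
  have hdσ : ∀ l, d (σ l) l ≠ 0 := fun l => by rw [hσ]; exact hmf l
  have hd0 : ∀ m l, m ≠ σ l → d m l = 0 := by
    intro m l hm
    have h1 : σ (σ.symm m) = m := σ.apply_symm_apply m
    have h2 : σ.symm m ≠ l := fun h => hm (by rw [← h1, h])
    have := hProw (σ (σ.symm m)) (σ.symm m) l h2 (hdσ _)
    rwa [h1] at this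
  have hd2 : ∀ l, d (σ l) l * d (σ l) l = 1 := by
    intro l
    have hE := EIP l l
    rw [if_pos rfl] at hE
    rw [Fintype.sum_eq_single (σ l) (fun m hm => by rw [hd0 m l hm]; ring)] at hE
    rcases hε (σ l) with h1 | h1 <;> rcases hε l with h2 | h2 <;> rw [h1, h2] at hE <;>
      nlinarith [mul_self_nonneg (d (σ l) l)]
  have hcz : ∀ m j, m ≠ σ j → c m j = 0 := by
    intro m j hm
    have h1 : σ (σ.symm m) = m := σ.apply_symm_apply m
    have h2 : j ≠ σ.symm m := fun h => hm (by rw [h, h1])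
    have hd : d m (σ.symm m) ≠ 0 := by
      have := hdσ (σ.symm m); rwa [h1] at this
    exact (mul_eq_zero.mp (hF1 j (σ.symm m) h2 m)).resolve_right hd
  have hkey : ∀ l, P (σ l) l * (c (σ l) l * d (σ l) l) = 1 := by
    intro l
    have hE := E1 l l l
    rw [if_pos ⟨rfl, rfl⟩] at hE
    rwa [Fintype.sum_eq_single (σ l) (fun m hm => by rw [hd0 m l hm]; ring)] at hE
  have hbnz : ∀ l, c (σ l) l ≠ 0 := by
    intro l h
    have := hkey l
    rw [h] at this
    simp at this
  have hPnz : ∀ l, P (σ l) l ≠ 0 := by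
    intro l h
    have := hkey l
    rw [h] at this
    simp at this
  have ha : ∀ m, a m = 0 := by
    have h1 : ∀ l, a (σ l) = 0 := by
      intro l
      have hE := E7 l l
      rw [Fintype.sum_eq_single (σ l) (fun m hm => by rw [hd0 m l hm]; ring)] at hE
      rcases mul_eq_zero.mp hE with h | h
      · exact absurd h (hPnz l)
      · exact (mul_eq_zero.mp h).resolve_right (hdσ l)
    intro m
    have := h1 (σ.symm m)
    rwa [σ.apply_symm_apply] at this
  have hc0 : ∀ i, c0 i = 0 := by
    have : Nontrivial (Fin k) := Fin.nontrivial_iff_two_le.mpr hk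
    intro i
    obtain ⟨j, hj⟩ := exists_ne i
    have hE := E3 i j j j
    rw [Fintype.sum_eq_single (σ j) (fun m hm => by rw [hd0 m j hm]; ring)] at hE
    rw [hcz (σ j) i (fun h => hj (σ.injective h)), zero_mul, sub_zero] at hE
    rcases mul_eq_zero.mp hE with h | h
    · exact (mul_eq_zero.mp h).resolve_right (hbnz j)
    · rcases mul_eq_zero.mp h with h' | h'
      · exact absurd h' (hbnz j)
      · exact absurd h' (hdσ j)
  have hkey' : ∀ l, a0 * (c (σ l) l * c (σ l) l * d (σ l) l) = 1 := by
    intro l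
    have := hkey l
    rw [hPdef, ha, hc0] at this
    linear_combination this
  have ha0 : a0 ≠ 0 := by
    intro h
    have := hkey' ⟨0, by omega⟩
    rw [h, zero_mul] at this
    norm_num at this
  have hal : ∀ m, al m = 0 := by
    have h1 : ∀ j, al (σ j) = 0 := by
      intro j
      have hE := E6 j j
      have hs : ∀ m, P m j * Bg m j + Bg m j * P m j = -2 * (a0 * (al m * (c m j * c m j))) := by
        intro m
        obtain ⟨t, ht⟩ := hBg m j
        rw [hPdef, ht, ha, hc0]
        ring
      rw [Finset.sum_congr rfl fun m _ => hs m] at hE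
      rw [Fintype.sum_eq_single (σ j) (fun m hm => by rw [hcz m j hm]; ring)] at hE
      have h2 : a0 * (al (σ j) * (c (σ j) j * c (σ j) j)) = 0 := by linarith
      rcases mul_eq_zero.mp h2 with h | h
      · exact absurd h ha0
      · rcases mul_eq_zero.mp h with h | h
        · exact h
        · rcases mul_eq_zero.mp h with h | h <;> exact absurd h (hbnz j)
    intro m
    have := h1 (σ.symm m)
    rwa [σ.apply_symm_apply] at this
  have hsign : ∀ l, d (σ l) l = Real.sign a0 ∧ |a0| * (c (σ l) l) ^ 2 = 1 := by
    intro l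
    have hk' := hkey' l
    rcases mul_self_eq_one_iff.mp (hd2 l) with h | h
    · have he : a0 * (c (σ l) l) ^ 2 = 1 := by rw [h] at hk'; linear_combination hk'
      have hpos : 0 < a0 := by nlinarith [sq_nonneg (c (σ l) l)]
      exact ⟨by rw [h, Real.sign_of_pos hpos], by rw [abs_of_pos hpos]; exact he⟩
    · have he : a0 * (c (σ l) l) ^ 2 = -1 := by rw [h] at hk'; linear_combination (-1 : ℝ) * hk'
      have hneg : a0 < 0 := by nlinarith [sq_nonneg (c (σ l) l)]
      exact ⟨by rw [h, Real.sign_of_neg hneg],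
        by rw [abs_of_neg hneg]; linear_combination (-1 : ℝ) * he⟩
  refine ⟨σ, fun l => c (σ l) l, fun i => (hsign i).2, ha, hc0, hal, hcz, fun j => rfl, ?_⟩
  intro m j
  by_cases h : m = σ j
  · rw [if_pos h, h]; exact (hsign j).1
  · rw [if_neg h]; exact hd0 m j h


theorem structure_group_k_ge_two (k : ℕ) (hk : 2 ≤ k) (ε : Fin k → ℝ)
    (hε : ∀ i, ε i = 1 ∨ ε i = -1)
    (A : Model k ≃ₗ[ℝ] Model k)
    (hAip : ∀ x y, ip k ε (A x) (A y) = ip k ε x y)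
    (hAR : ∀ x y z w, Rt k (A x) (A y) (A z) (A w) = Rt k x y z w) :
    ∃ (σ : Equiv.Perm (Fin k)) (a₀ : ℝ) (b : Fin k → ℝ),
      (∀ i, |a₀| * (b i) ^ 2 = 1) ∧
      A (U k 0) - a₀ • U k 0 ∈ AV k ∧
      (∀ i : Fin k, A (U k i.succ) - b i • U k (σ i).succ ∈ ASV k ε) ∧
      (∀ i : Fin k, A (S k i) - Real.sign a₀ • S k (σ i) ∈ AV k) := by
  have hk0 : 0 < k := by omega
  have hAVsymm : ∀ ξ ∈ AV k, (A.symm ξ : Model k) ∈ AV k := by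
    intro ξ hξ x y z
    have h := hAR (A.symm ξ) x y z
    rw [A.apply_symm_apply] at h
    rw [← h]
    exact hξ _ _ _
  have hhS : ∀ (i : Fin k) (m : Fin (k+1)), A (S k i) (Sum.inl m) = 0 := by
    intro i m
    have h1 : (A.symm (Vb k m) : Model k) ∈ AV k :=
      hAVsymm _ (mem_AV_of _ (Vb_inl m) (Vb_inrr m))
    have h2 : ip k ε (A (S k i)) (Vb k m) = 0 := by
      have h3 := hAip (S k i) (A.symm (Vb k m))
      rw [A.apply_symm_apply] at h3
      rw [h3]
      exact ip_S_AV ε i _ h1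
    rwa [ip_Vb] at h2
  have E1 : ∀ i j l : Fin k, ∑ m, (A (U k 0) (Sum.inl 0) * A (U k i.succ) (Sum.inl m.succ)
      - A (U k 0) (Sum.inl m.succ) * A (U k i.succ) (Sum.inl 0))
      * (A (U k j.succ) (Sum.inl m.succ) * A (S k l) (Sum.inr (Sum.inr m)))
      = if i = j ∧ j = l then 1 else 0 := by
    intro i j l
    have h := hAR (U k 0) (U k i.succ) (U k j.succ) (S k l)
    rw [RB1] at h
    rw [← h, Rt_last_S _ _ _ _ (hhS l)]
    rfl
  have E7 : ∀ i l : Fin k, ∑ m, (A (U k 0) (Sum.inl 0) * A (U k i.succ) (Sum.inl m.succ)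
      - A (U k 0) (Sum.inl m.succ) * A (U k i.succ) (Sum.inl 0))
      * (A (U k 0) (Sum.inl m.succ) * A (S k l) (Sum.inr (Sum.inr m))) = 0 := by
    intro i l
    have h := hAR (U k 0) (U k i.succ) (U k 0) (S k l)
    rw [RB2] at h
    rw [← h, Rt_last_S _ _ _ _ (hhS l)]
    rfl
  have E3 : ∀ i j l p : Fin k, ∑ m, (A (U k i.succ) (Sum.inl 0) * A (U k j.succ) (Sum.inl m.succ)
      - A (U k i.succ) (Sum.inl m.succ) * A (U k j.succ) (Sum.inl 0))
      * (A (U k l.succ) (Sum.inl m.succ) * A (S k p) (Sum.inr (Sum.inr m))) = 0 := by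
    intro i j l p
    have h := hAR (U k i.succ) (U k j.succ) (U k l.succ) (S k p)
    rw [RB3] at h
    rw [← h, Rt_last_S _ _ _ _ (hhS p)]
    rfl
  have E6 : ∀ j l : Fin k, ∑ m,
      ((A (U k 0) (Sum.inl 0) * A (U k j.succ) (Sum.inl m.succ)
        - A (U k 0) (Sum.inl m.succ) * A (U k j.succ) (Sum.inl 0))
       * (A (U k 0) (Sum.inl m.succ) * A (U k l.succ) (Sum.inr (Sum.inr m))
        - A (U k 0) (Sum.inr (Sum.inr m)) * A (U k l.succ) (Sum.inl m.succ))
      + (A (U k 0) (Sum.inl m.succ) * A (U k j.succ) (Sum.inr (Sum.inr m))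
        - A (U k 0) (Sum.inr (Sum.inr m)) * A (U k j.succ) (Sum.inl m.succ))
       * (A (U k 0) (Sum.inl 0) * A (U k l.succ) (Sum.inl m.succ)
        - A (U k 0) (Sum.inl m.succ) * A (U k l.succ) (Sum.inl 0))) = 0 := by
    intro j l
    have h := hAR (U k 0) (U k j.succ) (U k 0) (U k l.succ)
    rw [RB4] at h
    rw [← h]
    rfl
  have EIP : ∀ i j : Fin k, ∑ m, ε m * A (S k i) (Sum.inr (Sum.inr m))
      * A (S k j) (Sum.inr (Sum.inr m)) = if i = j then ε i else 0 := by
    intro i j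
    have h := hAip (S k i) (S k j)
    rw [RBip] at h
    rw [← h, ip]
    simp [hhS]
  obtain ⟨σ, b, hb2, ha, hc0, hal, hcz, hbdef, hdf⟩ :=
    key_algebra k hk ε hε (A (U k 0) (Sum.inl 0))
      (fun m => A (U k 0) (Sum.inl m.succ))
      (fun i => A (U k i.succ) (Sum.inl 0))
      (fun m => A (U k 0) (Sum.inr (Sum.inr m)))
      (fun m i => A (U k i.succ) (Sum.inl m.succ))
      (fun m i => A (S k i) (Sum.inr (Sum.inr m)))
      (fun m i => A (U k 0) (Sum.inl 0) * A (U k i.succ) (Sum.inl m.succ)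
        - A (U k 0) (Sum.inl m.succ) * A (U k i.succ) (Sum.inl 0))
      (fun m i => A (U k 0) (Sum.inl m.succ) * A (U k i.succ) (Sum.inr (Sum.inr m))
        - A (U k 0) (Sum.inr (Sum.inr m)) * A (U k i.succ) (Sum.inl m.succ))
      (fun m i => rfl) E1 E7 E3 E6
      (fun m j => ⟨A (U k j.succ) (Sum.inr (Sum.inr m)), rfl⟩) EIP
  have ha' : ∀ m : Fin k, A (U k 0) (Sum.inl m.succ) = 0 := ha
  have hc0' : ∀ i : Fin k, A (U k i.succ) (Sum.inl 0) = 0 := hc0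
  have hal' : ∀ m : Fin k, A (U k 0) (Sum.inr (Sum.inr m)) = 0 := hal
  have hcz' : ∀ m j : Fin k, m ≠ σ j → A (U k j.succ) (Sum.inl m.succ) = 0 := hcz
  have hbdef' : ∀ j : Fin k, A (U k j.succ) (Sum.inl (σ j).succ) = b j := hbdef
  have hdf' : ∀ m j : Fin k, A (S k j) (Sum.inr (Sum.inr m))
      = if m = σ j then Real.sign (A (U k 0) (Sum.inl 0)) else 0 := hdf
  refine ⟨σ, A (U k 0) (Sum.inl 0), b, hb2, ?_, ?_, ?_⟩
  · apply mem_AV_of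
    · intro m
      refine Fin.cases ?_ (fun i => ?_) m
      · simp [U_inl_zero]
      · simp [U_zero_inl_succ, ha' i]
    · intro m
      simp [U_inr, hal' m]
  · intro i
    apply mem_ASV_of hk0
    intro m
    refine Fin.cases ?_ (fun m' => ?_) m
    · simp [U_succ_inl_zero, hc0' i]
    · rw [Pi.sub_apply, Pi.smul_apply, smul_eq_mul, U_succ_inl_succ]
      by_cases h : m' = σ i
      · rw [if_pos h, h, hbdef' i]; ring
      · rw [if_neg h, hcz' m' i h]; ring
  · intro i
    apply mem_AV_of
    · intro m
      simp [hhS i m, S_inl]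
    · intro m
      rw [Pi.sub_apply, Pi.smul_apply, smul_eq_mul, S_inrr, hdf' m i]
      split_ifs <;> ring
end

section
/- Assume k = 1. For every isomorphism A of the 0-model 𝒱 there exist real constants a₀, a₁, b₁ with |a₀|·b₁² = 1 (in particular a₀ ≠ 0 and b₁ ≠ 0), such that: A U₀ − a₀ U₀ ∈ A_V; A U₁ − a₁ U₀ − b₁ U₁ ∈ A_{S,V}; and A S₁ − sign(a₀) S₁ ∈ A_V. -/
open Finset

@[simp] lemma U_app_inl (k : ℕ) (i j : Fin (k+1)) :
    U k i (Sum.inl j) = if j = i then 1 else 0 := by simp [U, Pi.single_apply]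
@[simp] lemma U_app_inr (k : ℕ) (i : Fin (k+1)) (x) :
    U k i (Sum.inr x) = 0 := by simp [U, Pi.single_apply]
@[simp] lemma Vb_app_inl (k : ℕ) (i : Fin (k+1)) (j : Fin (k+1)) :
    Vb k i (Sum.inl j) = 0 := by simp [Vb, Pi.single_apply]
@[simp] lemma Vb_app_inr_inl (k : ℕ) (i j : Fin (k+1)) :
    Vb k i (Sum.inr (Sum.inl j)) = if j = i then 1 else 0 := by simp [Vb, Pi.single_apply]
@[simp] lemma Vb_app_inr_inr (k : ℕ) (i : Fin (k+1)) (j : Fin k) :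
    Vb k i (Sum.inr (Sum.inr j)) = 0 := by simp [Vb, Pi.single_apply]
@[simp] lemma S_app_inl (k : ℕ) (i : Fin k) (j : Fin (k+1)) :
    S k i (Sum.inl j) = 0 := by simp [S, Pi.single_apply]
@[simp] lemma S_app_inr_inl (k : ℕ) (i : Fin k) (j : Fin (k+1)) :
    S k i (Sum.inr (Sum.inl j)) = 0 := by simp [S, Pi.single_apply]
@[simp] lemma S_app_inr_inr (k : ℕ) (i j : Fin k) :
    S k i (Sum.inr (Sum.inr j)) = if j = i then 1 else 0 := by simp [S, Pi.single_apply]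

lemma memAV_of (ξ : Model 1) (h0 : ξ (Sum.inl 0) = 0) (h1 : ξ (Sum.inl 1) = 0)
    (h2 : ξ (Sum.inr (Sum.inr 0)) = 0) : ξ ∈ AV 1 := by
  intro x y z
  simp [Rt, Af, Bf, Fin.sum_univ_one, h0, h1, h2]

lemma AV_coords (ξ : Model 1) (h : ξ ∈ AV 1) :
    ξ (Sum.inl 0) = 0 ∧ ξ (Sum.inl 1) = 0 ∧ ξ (Sum.inr (Sum.inr 0)) = 0 := by
  have h1 := h (U 1 1) (U 1 1) (S 1 0)
  have h2 := h (U 1 0) (U 1 1) (S 1 0)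
  have h3 := h (U 1 1) (U 1 0) (U 1 1)
  simp [Rt, Af, Bf, Fin.sum_univ_one] at h1 h2 h3
  refine ⟨?_, ?_, ?_⟩ <;> linarith

lemma key (ε0 p0 p1 p2 q0 q1 q2 t0 t1 t2 a b c d x y : ℝ)
    (hε : ε0 = 1 ∨ ε0 = -1)
    (hr1 : (p0*q1 - p1*q0)*(q1*t2 - q2*t1) + (p1*q2 - p2*q1)*(q0*t1 - q1*t0) = 1)
    (hr2 : (p0*q1 - p1*q0)*(p1*q2 - p2*q1) + (p1*q2 - p2*q1)*(p0*q1 - p1*q0) = 0)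
    (hr3 : (p0*q1 - p1*q0)*(p1*t2 - p2*t1) + (p1*q2 - p2*q1)*(p0*t1 - p1*t0) = 0)
    (e1 : p0*a + p1*b = 1) (e2 : p0*c + p1*d = 0)
    (e3 : q0*a + q1*b = 0) (e4 : q0*c + q1*d = 1)
    (e5 : t0*a + t1*b = 0) (e6 : t0*c + t1*d = 0)
    (eS : t0*x + x*t0 + t1*y + y*t1 + ε0*t2*t2 = ε0) :
    t0 = 0 ∧ t1 = 0 ∧ p1 = 0 ∧ p2 = 0 ∧ |p0| * q1 ^ 2 = 1 ∧ Real.sign p0 = t2 := by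
  have h14 : (p0*a + p1*b)*(q0*c + q1*d) = 1 := by rw [e1, e4]; norm_num
  have h23 : (p0*c + p1*d)*(q0*a + q1*b) = 0 := by rw [e2]; ring
  have hdet : (a*d - b*c)*(p0*q1 - p1*q0) = 1 := by linear_combination h14 - h23
  have ht0 : t0 = 0 := by
    linear_combination (-t0)*hdet + ((p0*q1 - p1*q0)*d)*e5 - ((p0*q1 - p1*q0)*b)*e6
  have ht1 : t1 = 0 := by
    linear_combination (-t1)*hdet + ((p0*q1 - p1*q0)*a)*e6 - ((p0*q1 - p1*q0)*c)*e5
  subst ht0; subst ht1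
  have ht2sq : t2^2 = 1 := by
    rcases hε with h | h <;> subst h
    · linear_combination eS
    · linear_combination -eS
  have hA : (p0*q1 - p1*q0)*q1*t2 = 1 := by linear_combination hr1
  have hB : (p0*q1 - p1*q0)*p1*t2 = 0 := by linear_combination hr3
  have hp1 : p1 = 0 := by
    linear_combination (-(p1*((p0*q1 - p1*q0)*q1*t2 + 1)))*hA + ((p0*q1 - p1*q0)*q1^2*t2)*hB
  subst hp1
  have hp2 : p2 = 0 := by
    linear_combination (-(p2*(p0*q1^2*t2 + 1)))*hA + (p2*p0^2*q1^4)*ht2sq - (p0*q1^2/2)*hr2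
  subst hp2
  have hA' : p0*q1^2*t2 = 1 := by linear_combination hA
  have ht2 : t2 = 1 ∨ t2 = -1 := by
    have h := mul_eq_zero.mp (show (t2 - 1)*(t2 + 1) = 0 by linear_combination ht2sq)
    rcases h with h | h
    · exact Or.inl (by linarith)
    · exact Or.inr (by linarith)
  have hq1 : q1 ≠ 0 := by
    intro h; rw [h] at hA'; simp at hA'
  have hq1sq : 0 < q1^2 := by positivity
  rcases ht2 with h | h <;> subst h
  · have hp0 : 0 < p0 := by nlinarith
    exact ⟨rfl, rfl, rfl, rfl, by rw [abs_of_pos hp0]; linarith, Real.sign_of_pos hp0⟩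
  · have hp0 : p0 < 0 := by nlinarith
    exact ⟨rfl, rfl, rfl, rfl, by rw [abs_of_neg hp0]; linarith, Real.sign_of_neg hp0⟩

theorem structure_group_k_eq_one (ε : Fin 1 → ℝ)
    (hε : ∀ i, ε i = 1 ∨ ε i = -1)
    (A : Model 1 ≃ₗ[ℝ] Model 1)
    (hAip : ∀ x y, ip 1 ε (A x) (A y) = ip 1 ε x y)
    (hAR : ∀ x y z w, Rt 1 (A x) (A y) (A z) (A w) = Rt 1 x y z w) :
    ∃ (a₀ a₁ b₁ : ℝ),
      |a₀| * b₁ ^ 2 = 1 ∧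
      A (U 1 0) - a₀ • U 1 0 ∈ AV 1 ∧
      A (U 1 1) - a₁ • U 1 0 - b₁ • U 1 1 ∈ ASV 1 ε ∧
      A (S 1 0) - Real.sign a₀ • S 1 0 ∈ AV 1 := by
  have hAmem : ∀ ξ ∈ AV 1, A ξ ∈ AV 1 := by
    intro ξ hξ x y z
    have h := hAR ξ (A.symm x) (A.symm y) (A.symm z)
    simp only [LinearEquiv.apply_symm_apply] at h
    rw [h]; exact hξ _ _ _
  have hVb0 : (Vb 1 0) ∈ AV 1 := memAV_of _ (by simp) (by simp) (by simp)
  have hVb1 : (Vb 1 1) ∈ AV 1 := memAV_of _ (by simp) (by simp) (by simp)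
  obtain ⟨hW00, hW01, hW02⟩ := AV_coords _ (hAmem _ hVb0)
  obtain ⟨hW10, hW11, hW12⟩ := AV_coords _ (hAmem _ hVb1)
  have hr1 := hAR (U 1 0) (U 1 1) (U 1 1) (S 1 0)
  have hr2 := hAR (U 1 0) (U 1 1) (U 1 0) (U 1 1)
  have hr3 := hAR (U 1 0) (U 1 1) (U 1 0) (S 1 0)
  have e1 := hAip (U 1 0) (Vb 1 0)
  have e2 := hAip (U 1 0) (Vb 1 1)
  have e3 := hAip (U 1 1) (Vb 1 0)
  have e4 := hAip (U 1 1) (Vb 1 1)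
  have e5 := hAip (S 1 0) (Vb 1 0)
  have e6 := hAip (S 1 0) (Vb 1 1)
  have eS := hAip (S 1 0) (S 1 0)
  simp only [Rt, Af, Bf, ip, Fin.sum_univ_one, Fin.sum_univ_two,
    Fin.succ_zero_eq_one] at hr1 hr2 hr3 e1 e2 e3 e4 e5 e6 eS
  simp at hr1 hr2 hr3 e1 e2 e3 e4 e5 e6 eS
  obtain ⟨ht0, ht1, hp1, hp2, habs, hsgn⟩ :=
    key (ε 0)
      (A (U 1 0) (Sum.inl 0)) (A (U 1 0) (Sum.inl 1)) (A (U 1 0) (Sum.inr (Sum.inr 0)))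
      (A (U 1 1) (Sum.inl 0)) (A (U 1 1) (Sum.inl 1)) (A (U 1 1) (Sum.inr (Sum.inr 0)))
      (A (S 1 0) (Sum.inl 0)) (A (S 1 0) (Sum.inl 1)) (A (S 1 0) (Sum.inr (Sum.inr 0)))
      (A (Vb 1 0) (Sum.inr (Sum.inl 0))) (A (Vb 1 0) (Sum.inr (Sum.inl 1)))
      (A (Vb 1 1) (Sum.inr (Sum.inl 0))) (A (Vb 1 1) (Sum.inr (Sum.inl 1)))
      (A (S 1 0) (Sum.inr (Sum.inl 0))) (A (S 1 0) (Sum.inr (Sum.inl 1)))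
      (hε 0)
      (by linear_combination hr1)
      (by linear_combination hr2)
      (by linear_combination hr3)
      (by linear_combination e1 - (A (U 1 0) (Sum.inr (Sum.inl 0)))*hW00
            - (A (U 1 0) (Sum.inr (Sum.inl 1)))*hW01 - (ε 0 * A (U 1 0) (Sum.inr (Sum.inr 0)))*hW02)
      (by linear_combination e2 - (A (U 1 0) (Sum.inr (Sum.inl 0)))*hW10
            - (A (U 1 0) (Sum.inr (Sum.inl 1)))*hW11 - (ε 0 * A (U 1 0) (Sum.inr (Sum.inr 0)))*hW12)
      (by linear_combination e3 - (A (U 1 1) (Sum.inr (Sum.inl 0)))*hW00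
            - (A (U 1 1) (Sum.inr (Sum.inl 1)))*hW01 - (ε 0 * A (U 1 1) (Sum.inr (Sum.inr 0)))*hW02)
      (by linear_combination e4 - (A (U 1 1) (Sum.inr (Sum.inl 0)))*hW10
            - (A (U 1 1) (Sum.inr (Sum.inl 1)))*hW11 - (ε 0 * A (U 1 1) (Sum.inr (Sum.inr 0)))*hW12)
      (by linear_combination e5 - (A (S 1 0) (Sum.inr (Sum.inl 0)))*hW00
            - (A (S 1 0) (Sum.inr (Sum.inl 1)))*hW01 - (ε 0 * A (S 1 0) (Sum.inr (Sum.inr 0)))*hW02)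
      (by linear_combination e6 - (A (S 1 0) (Sum.inr (Sum.inl 0)))*hW10
            - (A (S 1 0) (Sum.inr (Sum.inl 1)))*hW11 - (ε 0 * A (S 1 0) (Sum.inr (Sum.inr 0)))*hW12)
      (by linear_combination eS)
  refine ⟨A (U 1 0) (Sum.inl 0), A (U 1 1) (Sum.inl 0), A (U 1 1) (Sum.inl 1),
    habs, ?_, ?_, ?_⟩
  · apply memAV_of <;> simp [hp1, hp2]
  · intro ξ hξ
    obtain ⟨z0, z1, z2⟩ := AV_coords ξ hξ
    simp [ip, Fin.sum_univ_two, Fin.sum_univ_one, z0, z1, z2]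
    try ring
  · apply memAV_of <;> simp [ht0, ht1, hsgn]
end

section
/- Let k ≥ 1. Suppose V = V₁ ⊕ V₂ is a direct sum decomposition into two subspaces that are orthogonal with respect to (·,·), and suppose R(x₁,x₂,x₃,x₄) = 0 whenever each argument x_m lies in V₁ ∪ V₂ and not all four arguments lie in the same summand V_p. Then V₁ = {0} or V₂ = {0}. In other words, the 0-model 𝒱 is indecomposable. -/
open Finset

/- ### Auxiliary lemmas -/

lemma ip_comm (k : ℕ) (ε : Fin k → ℝ) (x y : Model k) : ip k ε x y = ip k ε y x := by
  unfold ip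
  congr 1
  · exact Finset.sum_congr rfl fun i _ => by ring
  · exact Finset.sum_congr rfl fun i _ => by ring

lemma Rt_add₃ (k : ℕ) (x y z z' w : Model k) :
    Rt k x y (z + z') w = Rt k x y z w + Rt k x y z' w := by
  simp only [Rt, Af, Bf, Pi.add_apply, ← Finset.sum_add_distrib]
  exact Finset.sum_congr rfl fun i _ => by ring

lemma Rt_add₄ (k : ℕ) (x y z w w' : Model k) :
    Rt k x y z (w + w') = Rt k x y z w + Rt k x y z w' := by
  simp only [Rt, Af, Bf, Pi.add_apply, ← Finset.sum_add_distrib]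
  exact Finset.sum_congr rfl fun i _ => by ring

lemma decomp_aux (k : ℕ) (V₁ V₂ : Submodule ℝ (Model k)) (hsup : V₁ ⊔ V₂ = ⊤)
    (v : Model k) : ∃ x ∈ V₁, ∃ y ∈ V₂, x + y = v := by
  have hv : v ∈ V₁ ⊔ V₂ := by rw [hsup]; exact Submodule.mem_top
  exact Submodule.mem_sup.mp hv

lemma Rt_mixed (k : ℕ) (V₁ V₂ : Submodule ℝ (Model k))
    (hsup : V₁ ⊔ V₂ = ⊤) (hinf : V₁ ⊓ V₂ = ⊥)
    (hvan : ∀ x y z w : Model k,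
      x ∈ (V₁ : Set (Model k)) ∪ (V₂ : Set (Model k)) →
      y ∈ (V₁ : Set (Model k)) ∪ (V₂ : Set (Model k)) →
      z ∈ (V₁ : Set (Model k)) ∪ (V₂ : Set (Model k)) →
      w ∈ (V₁ : Set (Model k)) ∪ (V₂ : Set (Model k)) →
      ¬ ((x ∈ V₁ ∧ y ∈ V₁ ∧ z ∈ V₁ ∧ w ∈ V₁) ∨ (x ∈ V₂ ∧ y ∈ V₂ ∧ z ∈ V₂ ∧ w ∈ V₂)) →
      Rt k x y z w = 0)
    (x y : Model k) (hx : x ∈ V₁) (hy : y ∈ V₂) (z w : Model k) :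
    Rt k x y z w = 0 := by
  by_cases hx2 : x ∈ V₂
  · have hx0 : x = 0 := by
      have h : x ∈ V₁ ⊓ V₂ := ⟨hx, hx2⟩
      rwa [hinf, Submodule.mem_bot] at h
    simp [hx0, Rt, Af, Bf]
  by_cases hy1 : y ∈ V₁
  · have hy0 : y = 0 := by
      have h : y ∈ V₁ ⊓ V₂ := ⟨hy1, hy⟩
      rwa [hinf, Submodule.mem_bot] at h
    simp [hy0, Rt, Af, Bf]
  obtain ⟨z1, hz1, z2, hz2, hz⟩ := decomp_aux k V₁ V₂ hsup z
  obtain ⟨w1, hw1, w2, hw2, hw⟩ := decomp_aux k V₁ V₂ hsup w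
  have main : ∀ z' w' : Model k, z' ∈ (V₁ : Set (Model k)) ∪ (V₂ : Set (Model k)) →
      w' ∈ (V₁ : Set (Model k)) ∪ (V₂ : Set (Model k)) → Rt k x y z' w' = 0 := by
    intro z' w' hz' hw'
    refine hvan x y z' w' (Or.inl hx) (Or.inr hy) hz' hw' ?_
    rintro (⟨_, h, _⟩ | ⟨h, _⟩)
    · exact hy1 h
    · exact hx2 h
  rw [← hz, ← hw, Rt_add₃, Rt_add₄, Rt_add₄,
    main z1 w1 (Or.inl hz1) (Or.inl hw1), main z1 w2 (Or.inl hz1) (Or.inr hw2),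
    main z2 w1 (Or.inr hz2) (Or.inl hw1), main z2 w2 (Or.inr hz2) (Or.inr hw2)]
  ring

lemma Rt_eval_A (k : ℕ) (x y : Model k) (i : Fin k) :
    Rt k x y (U k i.succ) (S k i) = Af k i x y := by
  unfold Rt
  rw [Finset.sum_eq_single i]
  · simp [Af, Bf, U, S, Pi.single_apply, (Fin.succ_ne_zero i).symm]
  · intro j _ hj
    simp [Af, Bf, U, S, Pi.single_apply, (Fin.succ_ne_zero j).symm, Fin.succ_inj, hj]
  · simp

lemma Rt_eval_B (k : ℕ) (x y : Model k) (i : Fin k) :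
    Rt k x y (U k 0) (U k i.succ) = Bf k i x y := by
  unfold Rt
  rw [Finset.sum_eq_single i]
  · simp [Af, Bf, U, S, Pi.single_apply, (Fin.succ_ne_zero i).symm]
  · intro j _ hj
    simp [Af, Bf, U, S, Pi.single_apply, (Fin.succ_ne_zero j).symm, Fin.succ_inj, hj]
  · simp

section Key

variable (k : ℕ) (V₁ V₂ : Submodule ℝ (Model k))

lemma AB_mixed (hsup : V₁ ⊔ V₂ = ⊤) (hinf : V₁ ⊓ V₂ = ⊥)
    (hvan : ∀ x y z w : Model k,
      x ∈ (V₁ : Set (Model k)) ∪ (V₂ : Set (Model k)) →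
      y ∈ (V₁ : Set (Model k)) ∪ (V₂ : Set (Model k)) →
      z ∈ (V₁ : Set (Model k)) ∪ (V₂ : Set (Model k)) →
      w ∈ (V₁ : Set (Model k)) ∪ (V₂ : Set (Model k)) →
      ¬ ((x ∈ V₁ ∧ y ∈ V₁ ∧ z ∈ V₁ ∧ w ∈ V₁) ∨ (x ∈ V₂ ∧ y ∈ V₂ ∧ z ∈ V₂ ∧ w ∈ V₂)) →
      Rt k x y z w = 0)
    (x y : Model k) (hx : x ∈ V₁) (hy : y ∈ V₂) (i : Fin k) :
    Af k i x y = 0 ∧ Bf k i x y = 0 := by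
  constructor
  · rw [← Rt_eval_A k x y i]
    exact Rt_mixed k V₁ V₂ hsup hinf hvan x y hx hy _ _
  · rw [← Rt_eval_B k x y i]
    exact Rt_mixed k V₁ V₂ hsup hinf hvan x y hx hy _ _

lemma key_lemma (ε : Fin k → ℝ)
    (hsup : V₁ ⊔ V₂ = ⊤) (hinf : V₁ ⊓ V₂ = ⊥)
    (horth : ∀ x ∈ V₁, ∀ y ∈ V₂, ip k ε x y = 0)
    (hvan : ∀ x y z w : Model k,
      x ∈ (V₁ : Set (Model k)) ∪ (V₂ : Set (Model k)) →
      y ∈ (V₁ : Set (Model k)) ∪ (V₂ : Set (Model k)) →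
      z ∈ (V₁ : Set (Model k)) ∪ (V₂ : Set (Model k)) →
      w ∈ (V₁ : Set (Model k)) ∪ (V₂ : Set (Model k)) →
      ¬ ((x ∈ V₁ ∧ y ∈ V₁ ∧ z ∈ V₁ ∧ w ∈ V₁) ∨ (x ∈ V₂ ∧ y ∈ V₂ ∧ z ∈ V₂ ∧ w ∈ V₂)) →
      Rt k x y z w = 0)
    (h0 : ∀ y ∈ V₂, y (Sum.inl 0) = 0) : V₂ = ⊥ := by
  -- get a vector in V₁ with U₀-coordinate 1
  obtain ⟨a, ha, b, hb, hab⟩ := decomp_aux k V₁ V₂ hsup (U k 0)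
  have ha0 : a (Sum.inl 0) = 1 := by
    have h := congrFun hab (Sum.inl 0)
    have hb0 := h0 b hb
    simp only [Pi.add_apply, U, Pi.single_apply, if_pos rfl, if_true] at h
    linarith
  -- all U-coordinates vanish on V₂
  have hU2 : ∀ y ∈ V₂, ∀ i : Fin k, y (Sum.inl i.succ) = 0 := by
    intro y hy i
    have h := (AB_mixed k V₁ V₂ hsup hinf hvan a y ha hy i).1
    unfold Af at h
    rw [h0 y hy, ha0] at h
    linarith
  have hU : ∀ y ∈ V₂, ∀ l : Fin (k+1), y (Sum.inl l) = 0 := by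
    intro y hy l
    exact Fin.cases (h0 y hy) (hU2 y hy) l
  -- for each j there is c ∈ V₁ whose U-coordinates are those of U_j
  have hc : ∀ j : Fin (k+1), ∃ c ∈ V₁, ∀ l : Fin (k+1),
      c (Sum.inl l) = U k j (Sum.inl l) := by
    intro j
    obtain ⟨c, hcV, d, hd, hcd⟩ := decomp_aux k V₁ V₂ hsup (U k j)
    refine ⟨c, hcV, fun l => ?_⟩
    have h := congrFun hcd (Sum.inl l)
    have hdl := hU d hd l
    simp only [Pi.add_apply] at h
    linarith
  -- all S-coordinates vanish on V₂
  have hS : ∀ y ∈ V₂, ∀ i : Fin k, y (Sum.inr (Sum.inr i)) = 0 := by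
    intro y hy i
    obtain ⟨c, hcV, hcl⟩ := hc i.succ
    have h := (AB_mixed k V₁ V₂ hsup hinf hvan c y hcV hy i).2
    unfold Bf at h
    rw [hcl i.succ, hU y hy i.succ] at h
    simp only [U, Pi.single_apply, if_pos rfl, if_true] at h
    linarith
  -- all V-coordinates vanish on V₂
  have hV : ∀ y ∈ V₂, ∀ j : Fin (k+1), y (Sum.inr (Sum.inl j)) = 0 := by
    intro y hy j
    obtain ⟨c, hcV, hcl⟩ := hc j
    have h := horth c hcV y hy
    unfold ip at h
    have h2 : ∑ i : Fin k, ε i * c (Sum.inr (Sum.inr i)) * y (Sum.inr (Sum.inr i)) = 0 :=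
      Finset.sum_eq_zero fun i _ => by rw [hS y hy i]; ring
    have h3 : (∑ l : Fin (k+1),
        (c (Sum.inl l) * y (Sum.inr (Sum.inl l)) + c (Sum.inr (Sum.inl l)) * y (Sum.inl l)))
        = y (Sum.inr (Sum.inl j)) := by
      rw [Finset.sum_eq_single j]
      · rw [hcl j, hU y hy j]
        simp [U, Pi.single_apply]
      · intro l _ hl
        rw [hcl l, hU y hy l]
        simp [U, Pi.single_apply, hl]
      · simp
    rw [h2, h3] at h
    linarith
  -- conclude
  rw [eq_bot_iff]
  intro y hy
  rw [Submodule.mem_bot]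
  funext idx
  rcases idx with l | (j | i)
  · exact hU y hy l
  · exact hV y hy j
  · exact hS y hy i

end Key

theorem model_indecomposable (k : ℕ) (hk : 1 ≤ k) (ε : Fin k → ℝ)
    (hε : ∀ i, ε i = 1 ∨ ε i = -1)
    (V₁ V₂ : Submodule ℝ (Model k))
    (hsup : V₁ ⊔ V₂ = ⊤) (hinf : V₁ ⊓ V₂ = ⊥)
    (horth : ∀ x ∈ V₁, ∀ y ∈ V₂, ip k ε x y = 0)
    (hvan : ∀ x y z w : Model k,
      x ∈ (V₁ : Set (Model k)) ∪ (V₂ : Set (Model k)) →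
      y ∈ (V₁ : Set (Model k)) ∪ (V₂ : Set (Model k)) →
      z ∈ (V₁ : Set (Model k)) ∪ (V₂ : Set (Model k)) →
      w ∈ (V₁ : Set (Model k)) ∪ (V₂ : Set (Model k)) →
      ¬ ((x ∈ V₁ ∧ y ∈ V₁ ∧ z ∈ V₁ ∧ w ∈ V₁) ∨ (x ∈ V₂ ∧ y ∈ V₂ ∧ z ∈ V₂ ∧ w ∈ V₂)) →
      Rt k x y z w = 0) :
    V₁ = ⊥ ∨ V₂ = ⊥ := by
  -- swapped versions of the hypotheses
  have hsup' : V₂ ⊔ V₁ = ⊤ := by rwa [sup_comm]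
  have hinf' : V₂ ⊓ V₁ = ⊥ := by rwa [inf_comm]
  have horth' : ∀ x ∈ V₂, ∀ y ∈ V₁, ip k ε x y = 0 := fun x hx y hy => by
    rw [ip_comm]; exact horth y hy x hx
  have hvan' : ∀ x y z w : Model k,
      x ∈ (V₂ : Set (Model k)) ∪ (V₁ : Set (Model k)) →
      y ∈ (V₂ : Set (Model k)) ∪ (V₁ : Set (Model k)) →
      z ∈ (V₂ : Set (Model k)) ∪ (V₁ : Set (Model k)) →
      w ∈ (V₂ : Set (Model k)) ∪ (V₁ : Set (Model k)) →
      ¬ ((x ∈ V₂ ∧ y ∈ V₂ ∧ z ∈ V₂ ∧ w ∈ V₂) ∨ (x ∈ V₁ ∧ y ∈ V₁ ∧ z ∈ V₁ ∧ w ∈ V₁)) →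
      Rt k x y z w = 0 := by
    intro x y z w h1 h2 h3 h4 h5
    rw [Set.union_comm] at h1 h2 h3 h4
    exact hvan x y z w h1 h2 h3 h4 fun hc => h5 hc.symm
  -- dichotomy: the U₀-coordinate vanishes identically on V₁ or on V₂
  have dicho : (∀ x ∈ V₁, x (Sum.inl 0) = 0) ∨ (∀ y ∈ V₂, y (Sum.inl 0) = 0) := by
    by_contra hcon
    push_neg at hcon
    obtain ⟨⟨a, ha, ha0⟩, ⟨b, hb, hb0⟩⟩ := hcon
    set i : Fin k := ⟨0, hk⟩ with hi
    obtain ⟨c, hc, d, hd, hcd⟩ := decomp_aux k V₁ V₂ hsup (U k i.succ)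
    have e1 := (AB_mixed k V₁ V₂ hsup hinf hvan a d ha hd i).1
    have e2 := (AB_mixed k V₁ V₂ hsup hinf hvan c b hc hb i).1
    have e3 := (AB_mixed k V₁ V₂ hsup hinf hvan a b ha hb i).1
    unfold Af at e1 e2 e3
    have e4 : c (Sum.inl 0) + d (Sum.inl 0) = 0 := by
      have h := congrFun hcd (Sum.inl 0)
      have hne : (Sum.inl (0 : Fin (k+1)) : Idx k) ≠ Sum.inl i.succ := by
        simp [(Fin.succ_ne_zero i).symm]
      simp only [Pi.add_apply, U, Pi.single_apply, if_neg hne] at h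
      exact h
    have e5 : c (Sum.inl i.succ) + d (Sum.inl i.succ) = 1 := by
      have h := congrFun hcd (Sum.inl i.succ)
      simp only [Pi.add_apply, U, Pi.single_apply, if_pos rfl, if_true] at h
      exact h
    have hzero : a (Sum.inl 0) * b (Sum.inl 0) = 0 := by
      linear_combination b (Sum.inl 0) * e1 - a (Sum.inl 0) * e2 + c (Sum.inl 0) * e3 +
        a (Sum.inl i.succ) * b (Sum.inl 0) * e4 - a (Sum.inl 0) * b (Sum.inl 0) * e5
    rcases mul_eq_zero.mp hzero with h | h
    · exact ha0 h
    · exact hb0 h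
  rcases dicho with h | h
  · exact Or.inl (key_lemma k V₂ V₁ ε hsup' hinf' horth' hvan' h)
  · exact Or.inr (key_lemma k V₁ V₂ ε hsup hinf horth hvan h)
end

section
/- Let k ≥ 1. Then A_V := {ξ ∈ V : R(ξ,x,y,z) = 0 for all x,y,z ∈ V} equals the span of {V_0,…,V_k}, and its orthogonal complement with respect to (·,·), A_{S,V} := {η ∈ V : (η,ξ) = 0 for all ξ ∈ A_V}, equals the span of {S_1,…,S_k, V_0,…,V_k}. -/
open Finset

private lemma mem_span_Vb (k : ℕ) (x : Model k)
    (h1 : ∀ j, x (Sum.inl j) = 0) (h2 : ∀ i, x (Sum.inr (Sum.inr i)) = 0) :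
    x ∈ Submodule.span ℝ (Set.range (Vb k)) := by
  have hx : x = ∑ j : Fin (k+1), x (Sum.inr (Sum.inl j)) • Vb k j := by
    funext a
    rcases a with a | a | a
    · simp [Vb, Pi.single_apply, h1]
    · simp [Vb, Pi.single_apply]
    · simp [Vb, Pi.single_apply, h2]
  rw [hx]
  exact Submodule.sum_mem _ fun j _ =>
    Submodule.smul_mem _ _ (Submodule.subset_span ⟨j, rfl⟩)

private lemma mem_span_SVb (k : ℕ) (x : Model k)
    (h1 : ∀ j, x (Sum.inl j) = 0) :
    x ∈ Submodule.span ℝ (Set.range (S k) ∪ Set.range (Vb k)) := by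
  have hx : x = (∑ j : Fin (k+1), x (Sum.inr (Sum.inl j)) • Vb k j)
      + ∑ i : Fin k, x (Sum.inr (Sum.inr i)) • S k i := by
    funext a
    rcases a with a | a | a
    · simp [Vb, S, Pi.single_apply, h1]
    · simp [Vb, S, Pi.single_apply]
    · simp [Vb, S, Pi.single_apply]
  rw [hx]
  exact Submodule.add_mem _
    (Submodule.sum_mem _ fun j _ =>
      Submodule.smul_mem _ _ (Submodule.subset_span (Or.inr ⟨j, rfl⟩)))
    (Submodule.sum_mem _ fun i _ =>
      Submodule.smul_mem _ _ (Submodule.subset_span (Or.inl ⟨i, rfl⟩)))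

private lemma span_Vb_vanish (k : ℕ) (x : Model k)
    (hx : x ∈ Submodule.span ℝ (Set.range (Vb k))) :
    (∀ j, x (Sum.inl j) = 0) ∧ ∀ i, x (Sum.inr (Sum.inr i)) = 0 := by
  induction hx using Submodule.span_induction with
  | mem v hv => obtain ⟨j, rfl⟩ := hv; constructor <;> intro a <;> simp [Vb, Pi.single_apply]
  | zero => simp
  | add a b _ _ ha hb =>
      exact ⟨fun j => by simp [ha.1 j, hb.1 j], fun i => by simp [ha.2 i, hb.2 i]⟩
  | smul c a _ ha =>
      exact ⟨fun j => by simp [ha.1 j], fun i => by simp [ha.2 i]⟩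

private lemma span_SVb_vanish (k : ℕ) (x : Model k)
    (hx : x ∈ Submodule.span ℝ (Set.range (S k) ∪ Set.range (Vb k))) :
    ∀ j, x (Sum.inl j) = 0 := by
  induction hx using Submodule.span_induction with
  | mem v hv =>
      rcases hv with ⟨i, rfl⟩ | ⟨j, rfl⟩ <;> intro a <;> simp [S, Vb, Pi.single_apply]
  | zero => simp
  | add a b _ _ ha hb => intro j; simp [ha j, hb j]
  | smul c a _ ha => intro j; simp [ha j]

private lemma AV_eq_span (k : ℕ) (hk : 1 ≤ k) :
    AV k = (Submodule.span ℝ (Set.range (Vb k)) : Submodule ℝ (Model k)) := by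
  ext ξ
  constructor
  · intro hξ
    have hU0 : ∀ i : Fin k, ξ (Sum.inl 0) = 0 := by
      intro i
      have := hξ (U k i.succ) (U k i.succ) (S k i)
      simpa [Rt, Af, Bf, U, S, Pi.single_apply, Fin.succ_ne_zero, mul_ite, ite_and] using this
    have hS : ∀ i : Fin k, ξ (Sum.inr (Sum.inr i)) = 0 := by
      intro i
      have := hξ (U k i.succ) (U k 0) (U k i.succ)
      have h : -ξ (Sum.inr (Sum.inr i)) = 0 := by
        simpa [Rt, Af, Bf, U, Pi.single_apply, Fin.succ_ne_zero, mul_ite, ite_and] using this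
      linarith
    have hUi : ∀ i : Fin k, ξ (Sum.inl i.succ) = 0 := by
      intro i
      have := hξ (U k 0) (U k i.succ) (S k i)
      have h : -ξ (Sum.inl i.succ) = 0 := by
        simpa [Rt, Af, Bf, U, S, Pi.single_apply, Fin.succ_ne_zero, mul_ite, ite_and] using this
      linarith
    refine mem_span_Vb k ξ ?_ hS
    intro j
    rcases Fin.eq_zero_or_eq_succ j with rfl | ⟨i, rfl⟩
    · exact hU0 ⟨0, hk⟩
    · exact hUi i
  · intro hξ
    obtain ⟨h1, h2⟩ := span_Vb_vanish k ξ hξ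
    intro x y z
    simp [Rt, Af, Bf, h1, h2]

theorem kernel_and_its_perp (k : ℕ) (hk : 1 ≤ k) (ε : Fin k → ℝ)
    (hε : ∀ i, ε i = 1 ∨ ε i = -1) :
    AV k = (Submodule.span ℝ (Set.range (Vb k)) : Submodule ℝ (Model k)) ∧
    ASV k ε =
      (Submodule.span ℝ (Set.range (S k) ∪ Set.range (Vb k)) : Submodule ℝ (Model k)) := by
  have hAV := AV_eq_span k hk
  refine ⟨hAV, ?_⟩
  ext η
  constructor
  · intro hη
    refine mem_span_SVb k η ?_
    intro j
    have hVb : Vb k j ∈ AV k := by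
      rw [hAV]
      exact Submodule.subset_span ⟨j, rfl⟩
    have := hη (Vb k j) hVb
    simpa [ip, Vb, Pi.single_apply, mul_ite] using this
  · intro hη
    have h1 := span_SVb_vanish k η hη
    intro ξ hξ
    rw [hAV] at hξ
    obtain ⟨g1, g2⟩ := span_Vb_vanish k ξ hξ
    simp [ip, h1, g1, g2]
end

section
/- Let k ≥ 1 and let u₀, s_1,…,s_k, c_1,…,c_k, d_1,…,d_k be real numbers with d_i + 1 ≠ 0 for all i. On W = ℝ^{3k+2} with basis {e_{u_0},…,e_{u_k}, e_{v_0},…,e_{v_k}, e_{s_1},…,e_{s_k}}, let g be the symmetric bilinear form whose only nonzero values on pairs of basis vectors are g(e_{u_0},e_{u_i}) = 2c_i s_i, g(e_{u_i},e_{u_i}) = −2u₀ s_i, g(e_{u_0},e_{v_0}) = 1, g(e_{u_i},e_{v_i}) = 1, and g(e_{s_i},e_{s_i}) = ε_i (1 ≤ i ≤ k); and let T be the 4-linear form on W, antisymmetric in its first two and in its last two arguments and symmetric under interchange of the first pair with the second pair, whose only nonzero entries on basis vectors are generated by T(e_{u_0},e_{u_i},e_{u_i},e_{u_0}) = c_i²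 ε_i and T(e_{u_0},e_{u_i},e_{u_i},e_{s_i}) = d_i + 1 (1 ≤ i ≤ k). Then there exists a linear isomorphism Φ : W → V such that g(x,y) = (Φx,Φy) and T(x,y,z,w) = R(Φx,Φy,Φz,Φw) for all x,y,z,w ∈ W; that is, (W,g,T) is isomorphic to the 0-model 𝒱. -/
open Finset

/-- The metric `g` of the manifold `ℳ_F` evaluated at a point, on the coordinate
frame `{e_{u_0},…,e_{u_k}, e_{v_0},…,e_{v_k}, e_{s_1},…,e_{s_k}}` (indexed by `Idx k`),
with `c_i = f_i(u_i)`:  its only nonzero entries on basis vectors are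
`g(e_{u_0},e_{u_i}) = 2 c_i s_i`, `g(e_{u_i},e_{u_i}) = -2 u₀ s_i`,
`g(e_{u_0},e_{v_0}) = g(e_{u_i},e_{v_i}) = 1` and `g(e_{s_i},e_{s_i}) = ε_i`. -/
def gF (k : ℕ) (ε : Fin k → ℝ) (u₀ : ℝ) (s c : Fin k → ℝ) (x y : Model k) : ℝ :=
  (∑ i : Fin k, 2 * c i * s i *
      (x (Sum.inl 0) * y (Sum.inl i.succ) + x (Sum.inl i.succ) * y (Sum.inl 0)))
  + (∑ i : Fin k, (-(2 * u₀ * s i)) * (x (Sum.inl i.succ) * y (Sum.inl i.succ)))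
  + (x (Sum.inl 0) * y (Sum.inr (Sum.inl 0)) + x (Sum.inr (Sum.inl 0)) * y (Sum.inl 0))
  + (∑ i : Fin k,
      (x (Sum.inl i.succ) * y (Sum.inr (Sum.inl i.succ))
        + x (Sum.inr (Sum.inl i.succ)) * y (Sum.inl i.succ)))
  + (∑ i : Fin k, ε i * x (Sum.inr (Sum.inr i)) * y (Sum.inr (Sum.inr i)))

/-- `C_i(x,y) = x_{u_0} y_{u_i} - x_{u_i} y_{u_0}` on `W`. -/
def Cf (k : ℕ) (i : Fin k) (x y : Model k) : ℝ :=
  x (Sum.inl 0) * y (Sum.inl i.succ) - x (Sum.inl i.succ) * y (Sum.inl 0)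

/-- `D_i(x,y) = x_{u_i} y_{s_i} - x_{s_i} y_{u_i}` on `W`. -/
def Df (k : ℕ) (i : Fin k) (x y : Model k) : ℝ :=
  x (Sum.inl i.succ) * y (Sum.inr (Sum.inr i)) - x (Sum.inr (Sum.inr i)) * y (Sum.inl i.succ)

/-- The curvature tensor of `ℳ_F` at a point, with `c_i = f_i(u_i)` and `d_i = f_i'(u_i)`:
it is antisymmetric in the first two and in the last two slots, symmetric under
interchanging the two pairs, and its only nonzero entries on basis vectors are generated by
`T(e_{u_0},e_{u_i},e_{u_i},e_{u_0}) = c_i² ε_i` and `T(e_{u_0},e_{u_i},e_{u_i},e_{s_i}) = d_i + 1`. -/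
def Tc (k : ℕ) (ε : Fin k → ℝ) (c d : Fin k → ℝ) (x y z w : Model k) : ℝ :=
  ∑ i : Fin k,
    ( -((c i) ^ 2 * ε i) * (Cf k i x y * Cf k i z w)
      + (d i + 1) * (Cf k i x y * Df k i z w + Df k i x y * Cf k i z w) )

/-!
The isomorphism only has to match two sums of blocks indexed by `i`. Scaling the
`U_i`-coordinate by `√|d_i + 1|` and taking `sign(d_i + 1) x_{s_i} + b_i x_{u_0}` with
`b_i = c_i² ε_i / (2 |d_i + 1|)` as `S_i`-coordinate turns `A_i` into `√|d_i + 1| C_i` and `B_i`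
into `√|d_i + 1| (sign(d_i + 1) D_i - b_i C_i)`, so `R` pulls back to `T`. The `V`-coordinates do
not enter `R`, so they are free to be corrected (`V_i` by dividing by the scale and subtracting
`u₀ s_i x_{u_i}`, `V_0` by linear terms in `x_{u_i}`, `x_{s_i}`, `x_{u_0}`) until `(·,·)` pulls
back to `g`.
-/

section ZeroModelIsomorphism

variable {k : ℕ}

noncomputable def uScale (d : Fin k → ℝ) (i : Fin k) : ℝ := √|d i + 1|

noncomputable def sSign (d : Fin k → ℝ) (i : Fin k) : ℝ := SignType.sign (d i + 1)

noncomputable def sShear (ε c d : Fin k → ℝ) (i : Fin k) : ℝ :=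
  c i ^ 2 * ε i / (2 * |d i + 1|)

section Coefficients

variable {d : Fin k → ℝ} {i : Fin k}

lemma uScale_sq (d : Fin k → ℝ) (i : Fin k) : uScale d i ^ 2 = |d i + 1| :=
  Real.sq_sqrt (abs_nonneg _)

lemma uScale_ne_zero (hd : d i + 1 ≠ 0) : uScale d i ≠ 0 :=
  Real.sqrt_ne_zero'.mpr (abs_pos.mpr hd)

lemma uScale_sq_mul_sSign (d : Fin k → ℝ) (i : Fin k) :
    uScale d i ^ 2 * sSign d i = d i + 1 := by
  rw [uScale_sq, sSign, abs_mul_sign]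

lemma sSign_sq (hd : d i + 1 ≠ 0) : sSign d i ^ 2 = 1 := by
  rw [sSign, ← SignType.coe_pow, ← sign_pow, sign_pos (sq_pos_of_ne_zero hd)]
  rfl

lemma sSign_ne_zero (hd : d i + 1 ≠ 0) : sSign d i ≠ 0 :=
  left_ne_zero_of_mul_eq_one ((sq _).symm.trans (sSign_sq hd))

lemma two_mul_uScale_sq_mul_sShear (ε c : Fin k → ℝ) (hd : d i + 1 ≠ 0) :
    2 * (uScale d i ^ 2 * sShear ε c d i) = c i ^ 2 * ε i := by
  rw [uScale_sq, sShear]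
  field_simp [abs_ne_zero.mpr hd]

end Coefficients

abbrev coord (j : Idx k) : Model k →ₗ[ℝ] ℝ := LinearMap.proj j

noncomputable def v0Shift (ε s c d : Fin k → ℝ) (i : Fin k) : Model k →ₗ[ℝ] ℝ :=
  (2 * c i * s i) • coord (Sum.inl i.succ)
    - (ε i * sSign d i * sShear ε c d i) • coord (Sum.inr (Sum.inr i))
    - (ε i * sShear ε c d i ^ 2 / 2) • coord (Sum.inl 0)

noncomputable def toZeroModel (ε : Fin k → ℝ) (u₀ : ℝ) (s c d : Fin k → ℝ) :
    Model k →ₗ[ℝ] Model k :=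
  LinearMap.pi fun
    | Sum.inl j => Fin.cases (coord (Sum.inl 0)) (fun i => uScale d i • coord (Sum.inl i.succ)) j
    | Sum.inr (Sum.inl j) => Fin.cases (coord (Sum.inr (Sum.inl 0)) + ∑ i, v0Shift ε s c d i)
        (fun i => (uScale d i)⁻¹ •
          (coord (Sum.inr (Sum.inl i.succ)) - (u₀ * s i) • coord (Sum.inl i.succ))) j
    | Sum.inr (Sum.inr i) =>
        sSign d i • coord (Sum.inr (Sum.inr i)) + sShear ε c d i • coord (Sum.inl 0)

section Coordinates

variable (ε : Fin k → ℝ) (u₀ : ℝ) (s c d : Fin k → ℝ) (x : Model k) (i : Fin k)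

@[simp] lemma toZeroModel_apply_U_zero :
    toZeroModel ε u₀ s c d x (Sum.inl 0) = x (Sum.inl 0) := by
  simp [toZeroModel]

@[simp] lemma toZeroModel_apply_U_succ :
    toZeroModel ε u₀ s c d x (Sum.inl i.succ) = uScale d i * x (Sum.inl i.succ) := by
  simp [toZeroModel]

@[simp] lemma toZeroModel_apply_V_zero :
    toZeroModel ε u₀ s c d x (Sum.inr (Sum.inl 0)) =
      x (Sum.inr (Sum.inl 0)) + ∑ i, v0Shift ε s c d i x := by
  simp [toZeroModel]

@[simp] lemma toZeroModel_apply_V_succ :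
    toZeroModel ε u₀ s c d x (Sum.inr (Sum.inl i.succ)) =
      (x (Sum.inr (Sum.inl i.succ)) - u₀ * s i * x (Sum.inl i.succ)) / uScale d i := by
  simp [toZeroModel, div_eq_inv_mul]

@[simp] lemma toZeroModel_apply_S :
    toZeroModel ε u₀ s c d x (Sum.inr (Sum.inr i)) =
      sSign d i * x (Sum.inr (Sum.inr i)) + sShear ε c d i * x (Sum.inl 0) := by
  simp [toZeroModel]

end Coordinates

section Curvature

variable {ε : Fin k → ℝ} {u₀ : ℝ} {s c d : Fin k → ℝ} (x y : Model k) (i : Fin k)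

lemma Af_toZeroModel :
    Af k i (toZeroModel ε u₀ s c d x) (toZeroModel ε u₀ s c d y) =
      uScale d i * Cf k i x y := by
  simp only [Af, Cf, toZeroModel_apply_U_zero, toZeroModel_apply_U_succ]
  ring

lemma Bf_toZeroModel :
    Bf k i (toZeroModel ε u₀ s c d x) (toZeroModel ε u₀ s c d y) =
      uScale d i * (sSign d i * Df k i x y - sShear ε c d i * Cf k i x y) := by
  simp only [Bf, Df, Cf, toZeroModel_apply_U_succ, toZeroModel_apply_S]
  ring

lemma Rt_toZeroModel (hd : ∀ i, d i + 1 ≠ 0) (x y z w : Model k) :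
    Rt k (toZeroModel ε u₀ s c d x) (toZeroModel ε u₀ s c d y)
      (toZeroModel ε u₀ s c d z) (toZeroModel ε u₀ s c d w) = Tc k ε c d x y z w := by
  refine sum_congr rfl fun i _ => ?_
  simp only [Af_toZeroModel, Bf_toZeroModel]
  linear_combination
    (Cf k i x y * Df k i z w + Df k i x y * Cf k i z w) * uScale_sq_mul_sSign d i
      - Cf k i x y * Cf k i z w * two_mul_uScale_sq_mul_sShear ε c (hd i)

end Curvature

def ipBlock (ε : Fin k → ℝ) (x y : Model k) (i : Fin k) : ℝ :=
  x (Sum.inl i.succ) * y (Sum.inr (Sum.inl i.succ))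
    + x (Sum.inr (Sum.inl i.succ)) * y (Sum.inl i.succ)
    + ε i * x (Sum.inr (Sum.inr i)) * y (Sum.inr (Sum.inr i))

section Metric

variable {ε : Fin k → ℝ} {u₀ : ℝ} {s c d : Fin k → ℝ} (x y : Model k)

lemma ip_eq_add_sum_ipBlock : ip k ε x y =
    x (Sum.inl 0) * y (Sum.inr (Sum.inl 0)) + x (Sum.inr (Sum.inl 0)) * y (Sum.inl 0)
      + ∑ i, ipBlock ε x y i := by
  simp only [ip, ipBlock, Fin.sum_univ_succ, sum_add_distrib]
  ring

lemma gF_eq_add_sum_ipBlock : gF k ε u₀ s c x y =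
    x (Sum.inl 0) * y (Sum.inr (Sum.inl 0)) + x (Sum.inr (Sum.inl 0)) * y (Sum.inl 0)
      + ∑ i, (ipBlock ε x y i
        + 2 * c i * s i * (x (Sum.inl 0) * y (Sum.inl i.succ) + x (Sum.inl i.succ) * y (Sum.inl 0))
        - 2 * u₀ * s i * (x (Sum.inl i.succ) * y (Sum.inl i.succ))) := by
  simp only [gF, ipBlock, sum_add_distrib, sum_sub_distrib, neg_mul, sum_neg_distrib]
  ring

lemma ipBlock_toZeroModel {i : Fin k} (hd : d i + 1 ≠ 0) :
    x (Sum.inl 0) * v0Shift ε s c d i y + v0Shift ε s c d i x * y (Sum.inl 0)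
      + ipBlock ε (toZeroModel ε u₀ s c d x) (toZeroModel ε u₀ s c d y) i =
    ipBlock ε x y i
      + 2 * c i * s i * (x (Sum.inl 0) * y (Sum.inl i.succ) + x (Sum.inl i.succ) * y (Sum.inl 0))
      - 2 * u₀ * s i * (x (Sum.inl i.succ) * y (Sum.inl i.succ)) := by
  simp only [ipBlock, v0Shift, toZeroModel_apply_U_succ, toZeroModel_apply_V_succ,
    toZeroModel_apply_S, LinearMap.sub_apply, LinearMap.smul_apply, coord, LinearMap.proj_apply,
    smul_eq_mul, div_eq_mul_inv]
  linear_combination ε i * x (Sum.inr (Sum.inr i)) * y (Sum.inr (Sum.inr i)) * sSign_sq hd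
    + (x (Sum.inl i.succ) * y (Sum.inr (Sum.inl i.succ))
        + x (Sum.inr (Sum.inl i.succ)) * y (Sum.inl i.succ)
        - 2 * u₀ * s i * (x (Sum.inl i.succ) * y (Sum.inl i.succ)))
      * mul_inv_cancel₀ (uScale_ne_zero hd)

lemma ip_toZeroModel (hd : ∀ i, d i + 1 ≠ 0) :
    ip k ε (toZeroModel ε u₀ s c d x) (toZeroModel ε u₀ s c d y) = gF k ε u₀ s c x y := by
  have blocks := sum_congr rfl fun i (_ : i ∈ univ) =>
    ipBlock_toZeroModel (ε := ε) (u₀ := u₀) (s := s) (c := c) x y (hd i)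
  rw [sum_add_distrib, sum_add_distrib, ← mul_sum, ← sum_mul] at blocks
  rw [ip_eq_add_sum_ipBlock, gF_eq_add_sum_ipBlock, toZeroModel_apply_U_zero,
    toZeroModel_apply_V_zero, toZeroModel_apply_U_zero, toZeroModel_apply_V_zero]
  linear_combination blocks

end Metric

lemma toZeroModel_injective {ε : Fin k → ℝ} {u₀ : ℝ} {s c d : Fin k → ℝ}
    (hd : ∀ i, d i + 1 ≠ 0) : Function.Injective (toZeroModel ε u₀ s c d) := by
  rw [← LinearMap.ker_eq_bot, LinearMap.ker_eq_bot']
  intro x hx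
  have hU0 : x (Sum.inl 0) = 0 := by simpa using congr_fun hx (Sum.inl 0)
  have hU (i : Fin k) : x (Sum.inl i.succ) = 0 := by
    simpa [uScale_ne_zero (hd i)] using congr_fun hx (Sum.inl i.succ)
  have hS (i : Fin k) : x (Sum.inr (Sum.inr i)) = 0 := by
    simpa [hU0, sSign_ne_zero (hd i)] using congr_fun hx (Sum.inr (Sum.inr i))
  have hV (i : Fin k) : x (Sum.inr (Sum.inl i.succ)) = 0 := by
    simpa [hU i, uScale_ne_zero (hd i)] using congr_fun hx (Sum.inr (Sum.inl i.succ))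
  have hV0 : x (Sum.inr (Sum.inl 0)) = 0 := by
    simpa [v0Shift, hU0, hU, hS] using congr_fun hx (Sum.inr (Sum.inl 0))
  ext (j | j | i)
  · cases j using Fin.cases <;> simp [hU0, hU]
  · cases j using Fin.cases <;> simp [hV0, hV]
  · simp [hS]

end ZeroModelIsomorphism

theorem manifold_zero_modeled_on_V_general (k : ℕ) (ε : Fin k → ℝ)
    (u₀ : ℝ) (s c d : Fin k → ℝ) (hd : ∀ i, d i + 1 ≠ 0) :
    ∃ Φ : Model k ≃ₗ[ℝ] Model k,
      (∀ x y : Model k, gF k ε u₀ s c x y = ip k ε (Φ x) (Φ y)) ∧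
      (∀ x y z w : Model k, Tc k ε c d x y z w = Rt k (Φ x) (Φ y) (Φ z) (Φ w)) :=
  ⟨LinearEquiv.ofInjectiveEndo (toZeroModel ε u₀ s c d) (toZeroModel_injective hd),
    fun x y => (ip_toZeroModel x y hd).symm,
    fun x y z w => (Rt_toZeroModel hd x y z w).symm⟩

theorem manifold_zero_modeled_on_V (k : ℕ) (hk : 1 ≤ k) (ε : Fin k → ℝ)
    (hε : ∀ i, ε i = 1 ∨ ε i = -1)
    (u₀ : ℝ) (s c d : Fin k → ℝ) (hd : ∀ i, d i + 1 ≠ 0) :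
    ∃ Φ : Model k ≃ₗ[ℝ] Model k,
      (∀ x y : Model k, gF k ε u₀ s c x y = ip k ε (Φ x) (Φ y)) ∧
      (∀ x y z w : Model k, Tc k ε c d x y z w = Rt k (Φ x) (Φ y) (Φ z) (Φ w)) :=
  manifold_zero_modeled_on_V_general k ε u₀ s c d hd
end

section
/- Let κ be a real constant with κ ≠ 0 and κ ≠ 1, and suppose f‴(u)·(1 + f′(u)) = κ·f″(u)² for all u ∈ I. Then there exist real constants a ≠ 0 and b such that |1 + f′(u)|^{1−κ} = a·u + b for all u ∈ I (in particular a·u + b > 0 on I). -/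
open Set

private lemma aux_const_of_deriv_zero {F : ℝ → ℝ} {s : Set ℝ} (hconv : Convex ℝ s)
    (hso : IsOpen s) (hF : ∀ x ∈ s, HasDerivAt F 0 x) {x y : ℝ}
    (hx : x ∈ s) (hy : y ∈ s) : F x = F y := by
  apply hconv.is_const_of_fderivWithin_eq_zero
    (fun z hz => ((hF z hz).differentiableAt).differentiableWithinAt) _ hx hy
  intro z hz
  rw [fderivWithin_of_isOpen hso hz, (hF z hz).hasFDerivAt.fderiv]
  ext; simp

theorem ode_case_kappa_generic (x₁ x₂ : ℝ) (hI : x₁ < x₂) (f : ℝ → ℝ)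
    (hf : ContDiffOn ℝ (⊤ : ℕ∞) f (Ioo x₁ x₂))
    (h1 : ∀ u ∈ Ioo x₁ x₂, 1 + deriv f u ≠ 0)
    (h2 : ∀ u ∈ Ioo x₁ x₂, iteratedDeriv 2 f u ≠ 0)
    (κ : ℝ) (hκ0 : κ ≠ 0) (hκ1 : κ ≠ 1)
    (h3 : ∀ u ∈ Ioo x₁ x₂,
      iteratedDeriv 3 f u * (1 + deriv f u) = κ * (iteratedDeriv 2 f u) ^ 2) :
    ∃ a b : ℝ, a ≠ 0 ∧
      (∀ u ∈ Ioo x₁ x₂, |1 + deriv f u| ^ (1 - κ) = a * u + b) ∧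
      (∀ u ∈ Ioo x₁ x₂, 0 < a * u + b) := by
  have hso : IsOpen (Ioo x₁ x₂) := isOpen_Ioo
  have hconv : Convex ℝ (Ioo x₁ x₂) := convex_Ioo x₁ x₂
  -- smoothness of the derivatives
  have hd1 : ContDiffOn ℝ (⊤ : ℕ∞) (deriv f) (Ioo x₁ x₂) := hf.deriv_of_isOpen hso (by simp)
  have hd2 : ContDiffOn ℝ (⊤ : ℕ∞) (iteratedDeriv 2 f) (Ioo x₁ x₂) := by
    rw [iteratedDeriv_succ, iteratedDeriv_one]
    exact hd1.deriv_of_isOpen hso (by simp)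
  have H2 : ∀ u ∈ Ioo x₁ x₂, HasDerivAt (deriv f) (iteratedDeriv 2 f u) u := by
    intro u hu
    have := ((hd1.differentiableOn (by simp)).differentiableAt (hso.mem_nhds hu)).hasDerivAt
    rw [iteratedDeriv_succ, iteratedDeriv_one]
    exact this
  have H3 : ∀ u ∈ Ioo x₁ x₂, HasDerivAt (iteratedDeriv 2 f) (iteratedDeriv 3 f u) u := by
    intro u hu
    have := ((hd2.differentiableOn (by simp)).differentiableAt (hso.mem_nhds hu)).hasDerivAt
    have h23 : iteratedDeriv 3 f u = deriv (iteratedDeriv 2 f) u := by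
      rw [show (3 : ℕ) = 2 + 1 from rfl, iteratedDeriv_succ]
    rw [h23]
    exact this
  -- constant sign of 1 + deriv f
  set u₀ : ℝ := (x₁ + x₂) / 2 with hu₀def
  have hu₀ : u₀ ∈ Ioo x₁ x₂ := ⟨by rw [hu₀def]; linarith, by rw [hu₀def]; linarith⟩
  obtain ⟨s₀, hs₀sq, hpos₀⟩ :
      ∃ s₀ : ℝ, s₀ * s₀ = 1 ∧ 0 < s₀ * (1 + deriv f u₀) := by
    rcases lt_or_gt_of_ne (h1 u₀ hu₀) with h | h
    · exact ⟨-1, by norm_num, by nlinarith⟩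
    · exact ⟨1, by norm_num, by nlinarith⟩
  have hs₀ne : s₀ ≠ 0 := by intro h; rw [h] at hs₀sq; norm_num at hs₀sq
  set g : ℝ → ℝ := fun u => s₀ * (1 + deriv f u) with hgdef
  have hgcont : ContinuousOn (fun u => 1 + deriv f u) (Ioo x₁ x₂) :=
    continuousOn_const.add (hd1.continuousOn)
  have hgpos : ∀ u ∈ Ioo x₁ x₂, 0 < g u := by
    intro u hu
    have hsame : 0 < (1 + deriv f u₀) * (1 + deriv f u) := by
      by_contra hcon
      push_neg at hcon
      have hne : (1 + deriv f u₀) * (1 + deriv f u) ≠ 0 :=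
        mul_ne_zero (h1 u₀ hu₀) (h1 u hu)
      have hlt : (1 + deriv f u₀) * (1 + deriv f u) < 0 := lt_of_le_of_ne hcon hne
      have hsub : uIcc u₀ u ⊆ Ioo x₁ x₂ := hconv.ordConnected.uIcc_subset hu₀ hu
      have hivt := intermediate_value_uIcc (hgcont.mono hsub)
      have h0 : (0 : ℝ) ∈ uIcc (1 + deriv f u₀) (1 + deriv f u) := by
        rcases lt_or_gt_of_ne (h1 u₀ hu₀) with hneg | hpos
        · have hB : 0 < 1 + deriv f u := by nlinarith
          exact mem_uIcc.2 (Or.inl ⟨hneg.le, hB.le⟩)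
        · have hB : 1 + deriv f u < 0 := by nlinarith
          exact mem_uIcc.2 (Or.inr ⟨hB.le, hpos.le⟩)
      obtain ⟨c, hc, hc0⟩ := hivt h0
      exact h1 c (hsub hc) hc0
    have h4 : 0 < (s₀ * (1 + deriv f u₀)) * (s₀ * (1 + deriv f u)) := by
      have : (s₀ * (1 + deriv f u₀)) * (s₀ * (1 + deriv f u))
          = (s₀ * s₀) * ((1 + deriv f u₀) * (1 + deriv f u)) := by ring
      rw [this, hs₀sq, one_mul]
      exact hsame
    show 0 < s₀ * (1 + deriv f u)
    nlinarith [h4, hpos₀]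
  have habs : ∀ u ∈ Ioo x₁ x₂, |1 + deriv f u| = g u := by
    intro u hu
    have hgu : 0 < s₀ * (1 + deriv f u) := hgpos u hu
    have hfac : (s₀ - 1) * (s₀ + 1) = 0 := by linear_combination hs₀sq
    rcases lt_or_gt_of_ne (h1 u hu) with hneg | hpos
    · have hs₀neg : s₀ < 0 := by nlinarith
      have hs : s₀ = -1 := by
        rcases mul_eq_zero.1 hfac with h | h
        · nlinarith
        · linarith
      show |1 + deriv f u| = s₀ * (1 + deriv f u)
      rw [abs_of_neg hneg, hs]; ring
    · have hs₀pos : 0 < s₀ := by nlinarith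
      have hs : s₀ = 1 := by
        rcases mul_eq_zero.1 hfac with h | h
        · linarith
        · nlinarith
      show |1 + deriv f u| = s₀ * (1 + deriv f u)
      rw [abs_of_pos hpos, hs]; ring
  -- g has derivative s₀ * iteratedDeriv 2 f
  have Hg : ∀ u ∈ Ioo x₁ x₂, HasDerivAt g (s₀ * iteratedDeriv 2 f u) u :=
    fun u hu => ((H2 u hu).const_add 1).const_mul s₀
  -- G = g ^ (1 - κ), with derivative Φ
  set G : ℝ → ℝ := fun u => g u ^ (1 - κ) with hGdef
  set Φ : ℝ → ℝ := fun u => s₀ * iteratedDeriv 2 f u * (1 - κ) * g u ^ (1 - κ - 1) with hΦdef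
  have HG : ∀ u ∈ Ioo x₁ x₂, HasDerivAt G (Φ u) u := by
    intro u hu
    exact (Hg u hu).rpow_const (Or.inl (hgpos u hu).ne')
  -- Φ has derivative 0
  have HΦ : ∀ u ∈ Ioo x₁ x₂, HasDerivAt Φ 0 u := by
    intro u hu
    have hA : HasDerivAt (fun u => s₀ * iteratedDeriv 2 f u * (1 - κ))
        (s₀ * iteratedDeriv 3 f u * (1 - κ)) u := ((H3 u hu).const_mul s₀).mul_const (1 - κ)
    have hB : HasDerivAt (fun u => g u ^ (1 - κ - 1))
        (s₀ * iteratedDeriv 2 f u * (1 - κ - 1) * g u ^ (1 - κ - 1 - 1)) u :=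
      (Hg u hu).rpow_const (Or.inl (hgpos u hu).ne')
    have hmul := hA.mul hB
    have hkey : s₀ * iteratedDeriv 3 f u * (1 - κ) * g u ^ (1 - κ - 1) +
        s₀ * iteratedDeriv 2 f u * (1 - κ) *
          (s₀ * iteratedDeriv 2 f u * (1 - κ - 1) * g u ^ (1 - κ - 1 - 1)) = 0 := by
      have hgne : g u ≠ 0 := (hgpos u hu).ne'
      have e1 : g u ^ (1 - κ - 1) = g u ^ (1 - κ - 1 - 1) * g u := by
        rw [← Real.rpow_add_one hgne]
        norm_num
      rw [e1]
      have hgu : g u = s₀ * (1 + deriv f u) := rfl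
      rw [hgu]
      linear_combination
        ((1 - κ) * (s₀ * (1 + deriv f u)) ^ (1 - κ - 1 - 1) * s₀ * s₀) * h3 u hu
    rw [hkey] at hmul
    exact hmul
  -- Φ is constant; its value is a
  set a : ℝ := Φ u₀ with hadef
  have hΦconst : ∀ u ∈ Ioo x₁ x₂, Φ u = a :=
    fun u hu => aux_const_of_deriv_zero hconv hso HΦ hu hu₀
  set b : ℝ := G u₀ - a * u₀ with hbdef
  have hFconst : ∀ u ∈ Ioo x₁ x₂, G u = a * u + b := by
    have hF0 : ∀ u ∈ Ioo x₁ x₂, HasDerivAt (fun u => G u - a * u) 0 u := by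
      intro u hu
      have := (HG u hu).sub ((hasDerivAt_id u).const_mul a)
      rw [hΦconst u hu] at this
      exact this.congr_deriv (by ring)
    intro u hu
    have := aux_const_of_deriv_zero hconv hso hF0 hu hu₀
    rw [hbdef]; linarith
  have hane : a ≠ 0 := by
    rw [hadef]
    show s₀ * iteratedDeriv 2 f u₀ * (1 - κ) * g u₀ ^ (1 - κ - 1) ≠ 0
    exact mul_ne_zero (mul_ne_zero (mul_ne_zero hs₀ne (h2 u₀ hu₀))
      (sub_ne_zero.2 (Ne.symm hκ1))) (Real.rpow_pos_of_pos (hgpos u₀ hu₀) _).ne'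
  refine ⟨a, b, hane, fun u hu => ?_, fun u hu => ?_⟩
  · rw [habs u hu, ← hFconst u hu]
  · rw [← hFconst u hu]
    exact Real.rpow_pos_of_pos (hgpos u hu) _
end

section
/- There is no smooth function f : ℝ → ℝ with f″(u) ≠ 0 and 1 + f′(u) ≠ 0 for all u ∈ ℝ such that both of the functions u ↦ f‴(u)(1 + f′(u)) / (f″(u))² and u ↦ ( 4(f′(u))² + 2f′(u) + 6 f(u) f″(u) − f(u)² f‴(u)/(1 + f′(u)) ) / (1 + f′(u))² are constant on ℝ. -/
/-- If a function is identically zero and has derivative `F' u` at every point,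
then `F'` is identically zero. -/
private lemma deriv_zero_of_fun_zero {F F' : ℝ → ℝ}
    (h : ∀ u, HasDerivAt F (F' u) u) (h0 : ∀ u, F u = 0) : ∀ u, F' u = 0 := by
  intro u
  have hF : F = fun _ => (0 : ℝ) := funext h0
  have h2 := (h u).deriv
  rw [hF] at h2
  simpa using h2.symm

theorem no_function_with_beta2_and_gamma2_constant :
    ¬ ∃ f : ℝ → ℝ, ContDiff ℝ (⊤ : ℕ∞) f ∧
      (∀ u : ℝ, iteratedDeriv 2 f u ≠ 0) ∧
      (∀ u : ℝ, 1 + deriv f u ≠ 0) ∧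
      (∃ c₁ : ℝ, ∀ u : ℝ,
        iteratedDeriv 3 f u * (1 + deriv f u) / (iteratedDeriv 2 f u) ^ 2 = c₁) ∧
      (∃ c₂ : ℝ, ∀ u : ℝ,
        (4 * (deriv f u) ^ 2 + 2 * deriv f u + 6 * f u * iteratedDeriv 2 f u
            - (f u) ^ 2 * iteratedDeriv 3 f u / (1 + deriv f u))
          / (1 + deriv f u) ^ 2 = c₂) := by
  rintro ⟨f, hf, h2, h1, ⟨c₁, hβ⟩, ⟨c₂, hγ⟩⟩
  -- notation for the derivatives
  set d1 : ℝ → ℝ := deriv f with hd1def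
  set d2 : ℝ → ℝ := deriv d1 with hd2def
  set d3 : ℝ → ℝ := deriv d2 with hd3def
  have hi2 : iteratedDeriv 2 f = d2 := by
    have h21 : (2 : ℕ) = 1 + 1 := rfl
    rw [h21, iteratedDeriv_succ, iteratedDeriv_one]
  have hi3 : iteratedDeriv 3 f = d3 := by
    have h32 : (3 : ℕ) = 1 + 1 + 1 := rfl
    rw [h32, iteratedDeriv_succ, iteratedDeriv_succ, iteratedDeriv_one]
  rw [hi2] at h2
  rw [hi2, hi3] at hβ hγ
  -- smoothness facts
  have hf0 : ContDiff ℝ (⊤ : ℕ∞) f := hf.of_le (by simp)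
  have hf1 : ContDiff ℝ (⊤ : ℕ∞) d1 := (contDiff_infty_iff_deriv.mp hf0).2
  have hf2 : ContDiff ℝ (⊤ : ℕ∞) d2 := (contDiff_infty_iff_deriv.mp hf1).2
  clear hf
  have Hf : ∀ u, HasDerivAt f (d1 u) u := fun u => (hf0.differentiable (by norm_num) u).hasDerivAt
  have Hd1 : ∀ u, HasDerivAt d1 (d2 u) u := fun u => (hf1.differentiable (by norm_num) u).hasDerivAt
  have Hd2 : ∀ u, HasDerivAt d2 (d3 u) u := fun u => (hf2.differentiable (by norm_num) u).hasDerivAt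
  -- cleared β relation
  have hβ' : ∀ u, d3 u * (1 + d1 u) = c₁ * (d2 u) ^ 2 := by
    intro u
    have h := hβ u
    rw [div_eq_iff (pow_ne_zero 2 (h2 u))] at h
    linarith [h]
  -- Step 1 : c₁ = 1
  have hc₁ : c₁ = 1 := by
    by_contra hne
    have hcne : c₁ - 1 ≠ 0 := sub_ne_zero.mpr hne
    set p : ℝ → ℝ := fun u => (1 + d1 u) / d2 u with hp
    have Hp : ∀ u, HasDerivAt p (1 - c₁) u := by
      intro u
      have h := ((Hd1 u).const_add 1).div (Hd2 u) (h2 u)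
      have hval : (d2 u * d2 u - (1 + d1 u) * d3 u) / (d2 u) ^ 2 = 1 - c₁ := by
        rw [div_eq_iff (pow_ne_zero 2 (h2 u))]
        linear_combination -hβ' u
      rw [hval] at h
      exact h
    have Hq : ∀ u, HasDerivAt (fun u => p u - (1 - c₁) * u) 0 u := by
      intro u
      have h := (Hp u).sub ((hasDerivAt_id u).const_mul (1 - c₁))
      exact h.congr_deriv (by ring)
    have hconst := is_const_of_deriv_eq_zero
      (fun u => (Hq u).differentiableAt) (fun u => (Hq u).deriv)
    set u₀ : ℝ := p 0 / (c₁ - 1) with hu₀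
    have h0 := hconst u₀ 0
    have hpu₀ : p u₀ = 0 := by
      have hlin : (1 - c₁) * u₀ = -p 0 := by
        rw [hu₀]
        field_simp
        ring
      linarith [h0, hlin]
    rw [hp] at hpu₀
    rcases div_eq_zero_iff.mp hpu₀ with h | h
    · exact h1 u₀ h
    · exact h2 u₀ h
  subst hc₁
  have hβ1 : ∀ u, d3 u * (1 + d1 u) = (d2 u) ^ 2 := by
    intro u; have := hβ' u; linarith [this]
  -- Step 2 : d2 = A * (1 + d1) for a nonzero constant A
  set A : ℝ := d2 0 / (1 + d1 0) with hAdef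
  have hA : A ≠ 0 := div_ne_zero (h2 0) (h1 0)
  have Hr : ∀ u, HasDerivAt (fun u => d2 u / (1 + d1 u)) 0 u := by
    intro u
    have h := (Hd2 u).div ((Hd1 u).const_add 1) (h1 u)
    have hval : (d3 u * (1 + d1 u) - d2 u * d2 u) / (1 + d1 u) ^ 2 = 0 := by
      rw [div_eq_iff (pow_ne_zero 2 (h1 u))]
      linear_combination hβ1 u
    rw [hval] at h
    exact h
  have hrconst := is_const_of_deriv_eq_zero
    (fun u => (Hr u).differentiableAt) (fun u => (Hr u).deriv)
  have hd2A : ∀ u, d2 u = A * (1 + d1 u) := by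
    intro u
    have h := hrconst u 0
    rw [div_eq_iff (h1 u)] at h
    linarith [h]
  have hd3A : ∀ u, d3 u = A * d2 u := by
    intro u
    have h := hβ1 u
    rw [hd2A u] at h
    -- d3 u * (1 + d1 u) = (A * (1 + d1 u))^2
    have := mul_right_cancel₀ (h1 u) (by linear_combination h :
      d3 u * (1 + d1 u) = (A * (A * (1 + d1 u))) * (1 + d1 u))
    rw [this, hd2A u]
  have Hd1' : ∀ u, HasDerivAt d1 (A * (1 + d1 u)) u := fun u => (hd2A u) ▸ (Hd1 u)
  -- Step 3 : the γ identity as a polynomial identity (I)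
  have hI : ∀ u, 4 * (d1 u) ^ 2 + 2 * d1 u + 6 * A * (f u * (1 + d1 u))
      - A ^ 2 * (f u) ^ 2 - c₂ * (1 + d1 u) ^ 2 = 0 := by
    intro u
    have h := hγ u
    rw [div_eq_iff (pow_ne_zero 2 (h1 u)), hd3A u, hd2A u] at h
    have hfrac : (f u) ^ 2 * (A * (A * (1 + d1 u))) / (1 + d1 u)
        = A ^ 2 * (f u) ^ 2 := by
      rw [div_eq_iff (h1 u)]
      ring
    rw [hfrac] at h
    linear_combination h
  -- identity (II)
  have H1 : ∀ u, HasDerivAt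
      (fun u => 4 * (d1 u) ^ 2 + 2 * d1 u + 6 * A * (f u * (1 + d1 u))
        - A ^ 2 * (f u) ^ 2 - c₂ * (1 + d1 u) ^ 2)
      (4 * (2 * d1 u ^ 1 * (A * (1 + d1 u))) + 2 * (A * (1 + d1 u))
        + 6 * A * (d1 u * (1 + d1 u) + f u * (A * (1 + d1 u)))
        - A ^ 2 * (2 * f u ^ 1 * d1 u)
        - c₂ * (2 * (1 + d1 u) ^ 1 * (A * (1 + d1 u)))) u := by
    intro u
    exact (((((Hd1' u).pow 2).const_mul 4).add ((Hd1' u).const_mul 2)).add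
        (((Hf u).mul ((Hd1' u).const_add 1)).const_mul (6 * A))).sub
        (((Hf u).pow 2).const_mul (A ^ 2)) |>.sub
        ((((Hd1' u).const_add 1).pow 2).const_mul c₂)
  have hII : ∀ u, (14 - 2 * c₂) * (1 + d1 u) ^ 2 - 12 * (1 + d1 u)
      + 4 * A * (f u * (1 + d1 u)) + 2 * A * f u = 0 := by
    intro u
    have h := deriv_zero_of_fun_zero H1 hI u
    apply mul_left_cancel₀ hA
    rw [mul_zero]
    linear_combination h
  -- identity (III)
  have H2 : ∀ u, HasDerivAt
      (fun u => (14 - 2 * c₂) * (1 + d1 u) ^ 2 - 12 * (1 + d1 u)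
        + 4 * A * (f u * (1 + d1 u)) + 2 * A * f u)
      ((14 - 2 * c₂) * (2 * (1 + d1 u) ^ 1 * (A * (1 + d1 u)))
        - 12 * (A * (1 + d1 u))
        + 4 * A * (d1 u * (1 + d1 u) + f u * (A * (1 + d1 u)))
        + 2 * A * d1 u) u := by
    intro u
    exact (((((Hd1' u).const_add 1).pow 2).const_mul (14 - 2 * c₂)).sub
        (((Hd1' u).const_add 1).const_mul 12)).add
        (((Hf u).mul ((Hd1' u).const_add 1)).const_mul (4 * A)) |>.add
        ((Hf u).const_mul (2 * A))
  have hIII : ∀ u, (16 - 2 * c₂) * (1 + d1 u) ^ 2 - 7 * (1 + d1 u) - 1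
      + 2 * A * (f u * (1 + d1 u)) = 0 := by
    intro u
    have h := deriv_zero_of_fun_zero H2 hII u
    apply mul_left_cancel₀ (mul_ne_zero two_ne_zero hA)
    rw [mul_zero]
    linear_combination h
  -- identity (IV)
  have H3 : ∀ u, HasDerivAt
      (fun u => (16 - 2 * c₂) * (1 + d1 u) ^ 2 - 7 * (1 + d1 u) - 1
        + 2 * A * (f u * (1 + d1 u)))
      ((16 - 2 * c₂) * (2 * (1 + d1 u) ^ 1 * (A * (1 + d1 u)))
        - 7 * (A * (1 + d1 u))
        + 2 * A * (d1 u * (1 + d1 u) + f u * (A * (1 + d1 u)))) u := by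
    intro u
    exact ((((((Hd1' u).const_add 1).pow 2).const_mul (16 - 2 * c₂)).sub
        (((Hd1' u).const_add 1).const_mul 7)).sub_const 1).add
        (((Hf u).mul ((Hd1' u).const_add 1)).const_mul (2 * A))
  have hIV : ∀ u, (34 - 4 * c₂) * (1 + d1 u) ^ 2 - 9 * (1 + d1 u)
      + 2 * A * (f u * (1 + d1 u)) = 0 := by
    intro u
    have h := deriv_zero_of_fun_zero H3 hIII u
    apply mul_left_cancel₀ hA
    rw [mul_zero]
    linear_combination h
  -- identity (V)
  have hV : ∀ u, (18 - 2 * c₂) * (1 + d1 u) ^ 2 - 2 * (1 + d1 u) + 1 = 0 := by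
    intro u
    linear_combination hIV u - hIII u
  -- identity (VI)
  have H5 : ∀ u, HasDerivAt
      (fun u => (18 - 2 * c₂) * (1 + d1 u) ^ 2 - 2 * (1 + d1 u) + 1)
      ((18 - 2 * c₂) * (2 * (1 + d1 u) ^ 1 * (A * (1 + d1 u)))
        - 2 * (A * (1 + d1 u))) u := by
    intro u
    exact (((((Hd1' u).const_add 1).pow 2).const_mul (18 - 2 * c₂)).sub
        (((Hd1' u).const_add 1).const_mul 2)).add_const 1
  have hVI : ∀ u, (18 - 2 * c₂) * (1 + d1 u) - 1 = 0 := by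
    intro u
    have h := deriv_zero_of_fun_zero H5 hV u
    apply mul_left_cancel₀ (mul_ne_zero (mul_ne_zero two_ne_zero hA) (h1 u))
    rw [mul_zero]
    linear_combination h
  -- final contradiction
  have H6 : ∀ u, HasDerivAt (fun u => (18 - 2 * c₂) * (1 + d1 u) - 1)
      ((18 - 2 * c₂) * (A * (1 + d1 u))) u := by
    intro u
    exact (((Hd1' u).const_add 1).const_mul (18 - 2 * c₂)).sub_const 1
  have h18 : 18 - 2 * c₂ = 0 := by
    have h := deriv_zero_of_fun_zero H6 hVI 0
    rcases mul_eq_zero.mp h with h | h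
    · exact h
    · exact absurd h (mul_ne_zero hA (h1 0))
  have := hVI 0
  rw [h18] at this
  norm_num at this
end

section
/- Let k ≥ 2 and ℓ ≥ 2 be integers. Let T₁ : V^5 → ℝ and T_ℓ : V^{4+ℓ} → ℝ be multilinear maps with the following vanishing property: T₁ (respectively T_ℓ) vanishes on every tuple of distinguished basis vectors except possibly on tuples that are obtained, by permuting the first four entries only, from a tuple of the form (U_0, U_j, U_j, S_j; U_j) or (U_0, U_j, U_j, U_0; U_j) (respectively (U_0, U_j, U_j, S_j; U_j,…,U_j) or (U_0, U_j, U_j, U_0; U_j,…,U_j), with U_j in all of the last ℓ slots) for some 1 ≤ j ≤ k. Then for every isomorphism A of the 0-model 𝒱 one has Σ_{j=1}^k T_ℓ(AU_0,AU_j,AU_j,AU_0;AU_j,…,AU_j) · (T₁(AU_0,AU_j,AU_j,AU_0;AU_j))^{ℓ−2} = Σ_{j=1}^k T_ℓ(U_0,U_j,U_j,U_0;U_j,…,U_j) · (T₁(U_0,U_j,U_j,U_0;U_j))^{ℓ−2}. (This is the algebraic content of the assertion that γ_ℓ is an ℓ-model invariant, i.e., independent of the normalized basis chosen.) -/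
open Finset

/-- The distinguished basis vector of `V` with index `idx`. -/
def e (k : ℕ) (idx : Idx k) : Model k := Pi.single idx 1

/-- The index tuple `(U_0, U_j, U_j, S_j)`. -/
def tS (k : ℕ) (j : Fin k) : Fin 4 → Idx k :=
  ![Sum.inl 0, Sum.inl j.succ, Sum.inl j.succ, Sum.inr (Sum.inr j)]

/-- The index tuple `(U_0, U_j, U_j, U_0)`. -/
def tU (k : ℕ) (j : Fin k) : Fin 4 → Idx k :=
  ![Sum.inl 0, Sum.inl j.succ, Sum.inl j.succ, Sum.inl 0]

/-- A tuple of basis indices (4 "curvature" slots plus `ℓ` "covariant derivative" slots)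
is *good* if it is obtained, by permuting the first four entries only, from a tuple of the
form `(U_0, U_j, U_j, S_j; U_j, …, U_j)` or `(U_0, U_j, U_j, U_0; U_j, …, U_j)`
for some `1 ≤ j ≤ k`. -/
def goodTuple (k ℓ : ℕ) (v : Fin 4 ⊕ Fin ℓ → Idx k) : Prop :=
  ∃ (j : Fin k) (π : Equiv.Perm (Fin 4)),
    ((∀ m : Fin 4, v (Sum.inl m) = tS k j (π m)) ∨
     (∀ m : Fin 4, v (Sum.inl m) = tU k j (π m))) ∧
    (∀ m : Fin ℓ, v (Sum.inr m) = Sum.inl j.succ)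

/-- The tuple of vectors `(x₀, x₁, x₂, x₃; y, …, y)`. -/
def tup (k ℓ : ℕ) (x₀ x₁ x₂ x₃ y : Model k) : Fin 4 ⊕ Fin ℓ → Model k :=
  Sum.elim ![x₀, x₁, x₂, x₃] (fun _ => y)

/-!
An isomorphism `A` preserves `ker R = span {V_i}`, hence also its orthogonal complement
`span {V_i, S_i}`, so its `U`-coordinates only see the `U`-coordinates of the argument.
Evaluating `R ∘ A = R` on basis vectors then shows that `A U_0` has no `U_i`- or `S_i`-component
(`i ≥ 1`), that `A U_j` has no `U_0`-component, and that `A U_j` has a `U`-component only along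
`U_{ρ j}` for a permutation `ρ`, with `(A U_0)_{U_0}² (A U_j)_{U_{ρ j}}⁴ = 1`; the last identity
uses `(A S_j, A S_j) = ε_j = ±1`. By multilinearity and the vanishing off good tuples, the `j`-th
summand on the left is `((A U_0)_{U_0}² (A U_j)_{U_{ρ j}}⁴)^(ℓ-1) = 1` times the `ρ j`-th summand
on the right.
-/

lemma exists_perm_monomial_of_mul_eq_zero {ι : Type*} [Fintype ι] [DecidableEq ι]
    {M N : ι → ι → ℝ} {c : ℝ} {ε : ι → ℝ} (hε : ∀ i, ε i = 1 ∨ ε i = -1)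
    (hMN : ∀ {p q}, p ≠ q → ∀ i, M i p * N i q = 0)
    (hcol : ∀ p, c * ∑ i, M i p ^ 2 * N i p = 1)
    (hN : ∀ p, ∑ i, ε i * N i p ^ 2 = ε p) :
    ∃ ρ : Equiv.Perm ι, ∀ p, (∀ i, i ≠ ρ p → M i p = 0) ∧ c ^ 2 * M (ρ p) p ^ 4 = 1 := by
  have hpivot : ∀ p, ∃ i, M i p * N i p ≠ 0 := by
    intro p
    by_contra! h
    have h0 : ∑ i, M i p ^ 2 * N i p = 0 :=
      Finset.sum_eq_zero fun i _ => by rw [sq, mul_assoc, h i, mul_zero]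
    simpa [h0] using hcol p
  choose ρ hρ using hpivot
  have hM_row : ∀ p p', p' ≠ p → M (ρ p) p' = 0 := fun p p' hp' =>
    (mul_eq_zero.1 (hMN hp' (ρ p))).resolve_right (right_ne_zero_of_mul (hρ p))
  have hN_row : ∀ p q, q ≠ p → N (ρ p) q = 0 := fun p q hq =>
    (mul_eq_zero.1 (hMN (Ne.symm hq) (ρ p))).resolve_left (left_ne_zero_of_mul (hρ p))
  have hinj : Function.Injective ρ := fun p p' h => by
    by_contra hne
    exact left_ne_zero_of_mul (hρ p') (h ▸ hM_row p p' (Ne.symm hne))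
  have hsurj := (Finite.injective_iff_bijective.1 hinj).2
  have hcol_supp : ∀ {P : ι → ι → ℝ}, (∀ p p', p' ≠ p → P (ρ p) p' = 0) →
      ∀ p i, i ≠ ρ p → P i p = 0 := fun hP p i hi => by
    obtain ⟨p', rfl⟩ := hsurj i
    exact hP p' p fun h => hi (h ▸ rfl)
  refine ⟨Equiv.ofBijective ρ ⟨hinj, hsurj⟩, fun p => ⟨hcol_supp hM_row p, ?_⟩⟩
  have hc := hcol p
  rw [Fintype.sum_eq_single (ρ p) fun i hi => by rw [hcol_supp hM_row p i hi]; ring] at hc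
  have hε' := hN p
  rw [Fintype.sum_eq_single (ρ p) fun i hi => by rw [hcol_supp hN_row p i hi]; ring] at hε'
  have hN1 : N (ρ p) p ^ 2 = 1 := by
    rcases hε (ρ p) with h | h <;> rcases hε p with h' | h' <;> rw [h, h'] at hε' <;>
      nlinarith [sq_nonneg (N (ρ p) p)]
  calc c ^ 2 * M (ρ p) p ^ 4 = (c * (M (ρ p) p ^ 2 * N (ρ p) p)) ^ 2 := by
        rw [mul_pow, mul_pow, hN1]; ring
    _ = 1 := by rw [hc, one_pow]

namespace ZeroModel

variable {k : ℕ}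

@[simp] lemma U_apply_inl (i j : Fin (k+1)) : U k i (Sum.inl j) = if j = i then 1 else 0 := by
  simp [U, Pi.single_apply]

@[simp] lemma U_apply_inr (i : Fin (k+1)) (r : Fin (k+1) ⊕ Fin k) : U k i (Sum.inr r) = 0 := by
  simp [U]

@[simp] lemma S_apply_inl (i : Fin k) (j : Fin (k+1)) : S k i (Sum.inl j) = 0 := by
  simp [S]

@[simp] lemma S_apply_inr_inr (i j : Fin k) :
    S k i (Sum.inr (Sum.inr j)) = if j = i then 1 else 0 := by
  simp [S, Pi.single_apply]

@[simp] lemma Vb_apply_inl (i j : Fin (k+1)) : Vb k i (Sum.inl j) = 0 := by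
  simp [Vb]

@[simp] lemma Vb_apply_inr_inl (i j : Fin (k+1)) :
    Vb k i (Sum.inr (Sum.inl j)) = if j = i then 1 else 0 := by
  simp [Vb, Pi.single_apply]

@[simp] lemma Vb_apply_inr_inr (i : Fin (k+1)) (j : Fin k) : Vb k i (Sum.inr (Sum.inr j)) = 0 := by
  simp [Vb]

lemma Rt_swap_pairs (x y z w : Model k) : Rt k x y z w = Rt k z w x y :=
  Finset.sum_congr rfl fun _ _ => by ring

lemma Rt_U0_U (j : Fin k) (x y : Model k) : Rt k x y (U k 0) (U k j.succ) = Bf k j x y := by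
  simp [Rt, Af, Bf, Fin.succ_ne_zero, eq_comm]

lemma Rt_of_forall_inl_eq_zero {s : Model k} (hs : ∀ i, s (Sum.inl i) = 0) (x y z : Model k) :
    Rt k x y z s = ∑ i, Af k i x y * z (Sum.inl i.succ) * s (Sum.inr (Sum.inr i)) := by
  simp only [Rt, Af, Bf, hs]
  exact Finset.sum_congr rfl fun _ _ => by ring

lemma Rt_U_S (x y : Model k) (j : Fin k) : Rt k x y (U k j.succ) (S k j) = Af k j x y := by
  rw [Rt_of_forall_inl_eq_zero (by simp)]
  simp [Fin.succ_inj]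

lemma Rt_U0_left_U0 (y w : Model k) : Rt k (U k 0) y (U k 0) w = 0 := by
  simp [Rt, Af, Bf, Fin.succ_ne_zero]

lemma Rt_self_U_self_U (x : Model k) (j : Fin k) :
    Rt k x (U k j.succ) x (U k j.succ) = -2 * x (Sum.inl 0) * x (Sum.inr (Sum.inr j)) := by
  simp only [Rt, Af, Bf, U_apply_inl, U_apply_inr, Fin.succ_inj]
  rw [Finset.sum_eq_single j (fun i _ hi => by simp [hi]) (by simp)]
  simp [(Fin.succ_ne_zero j).symm]
  ring

lemma Vb_mem_AV (n : Fin (k+1)) : Vb k n ∈ AV k := fun _ _ _ => by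
  simp [Rt, Af, Bf]

lemma apply_inl_eq_zero_of_mem_AV (hk : 0 < k) {ξ : Model k} (hξ : ξ ∈ AV k) (i : Fin (k+1)) :
    ξ (Sum.inl i) = 0 := by
  cases i using Fin.cases with
  | zero =>
    have h := hξ (U k (⟨0, hk⟩ : Fin k).succ) (U k (⟨0, hk⟩ : Fin k).succ) (S k ⟨0, hk⟩)
    rw [Rt_U_S] at h
    simpa [Af, Fin.succ_ne_zero] using h
  | succ j =>
    have h := hξ (U k 0) (U k j.succ) (S k j)
    simpa [Rt_U_S, Af, Fin.succ_ne_zero] using h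

lemma apply_S_eq_zero_of_mem_AV {ξ : Model k} (hξ : ξ ∈ AV k) (j : Fin k) :
    ξ (Sum.inr (Sum.inr j)) = 0 := by
  have h := hξ (U k j.succ) (U k 0) (U k j.succ)
  simpa [Rt_U0_U, Bf] using h

lemma mem_ASV_iff (hk : 0 < k) {ε : Fin k → ℝ} {η : Model k} :
    η ∈ ASV k ε ↔ ∀ i, η (Sum.inl i) = 0 := by
  constructor
  · intro hη i
    simpa [ip] using hη (Vb k i) (Vb_mem_AV i)
  · intro hη ξ hξ
    simp [ip, hη, apply_inl_eq_zero_of_mem_AV hk hξ, apply_S_eq_zero_of_mem_AV hξ]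

def PreservesIp (ε : Fin k → ℝ) (A : Model k ≃ₗ[ℝ] Model k) : Prop :=
  ∀ x y, ip k ε (A x) (A y) = ip k ε x y

def PreservesRt (A : Model k ≃ₗ[ℝ] Model k) : Prop :=
  ∀ x y z w, Rt k (A x) (A y) (A z) (A w) = Rt k x y z w

variable {ε : Fin k → ℝ} {A : Model k ≃ₗ[ℝ] Model k}

lemma PreservesIp.symm (hip : PreservesIp ε A) : PreservesIp ε A.symm := fun x y => by
  rw [← hip, A.apply_symm_apply, A.apply_symm_apply]

lemma PreservesRt.symm (hR : PreservesRt A) : PreservesRt A.symm := fun x y z w => by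
  rw [← hR]
  simp only [A.apply_symm_apply]

lemma PreservesRt.map_mem_AV (hR : PreservesRt A) {ξ : Model k} (hξ : ξ ∈ AV k) :
    A ξ ∈ AV k := fun x y z => by
  rw [← A.apply_symm_apply x, ← A.apply_symm_apply y, ← A.apply_symm_apply z, hR]
  exact hξ _ _ _

lemma PreservesIp.map_mem_ASV (hip : PreservesIp ε A) (hR : PreservesRt A) {η : Model k}
    (hη : η ∈ ASV k ε) : A η ∈ ASV k ε := fun ξ hξ => by
  rw [← A.apply_symm_apply ξ, hip]
  exact hη _ (hR.symm.map_mem_AV hξ)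

lemma map_apply_inl_eq_zero (hk : 0 < k) (hip : PreservesIp ε A) (hR : PreservesRt A)
    {s : Model k} (hs : ∀ i, s (Sum.inl i) = 0) (i : Fin (k+1)) : A s (Sum.inl i) = 0 :=
  (mem_ASV_iff hk).1 (hip.map_mem_ASV hR ((mem_ASV_iff hk).2 hs)) i

lemma apply_U0_inl_succ (hk : 0 < k) (hip : PreservesIp ε A) (hR : PreservesRt A) (i : Fin k) :
    A (U k 0) (Sum.inl i.succ) = 0 := by
  have hs := map_apply_inl_eq_zero hk hip.symm hR.symm (s := S k i) (by simp)
  calc A (U k 0) (Sum.inl i.succ) = Bf k i (A (U k 0)) (S k i) := by simp [Bf]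
    _ = Rt k (A (U k 0)) (A (A.symm (S k i))) (A (A.symm (U k 0)))
          (A (A.symm (U k i.succ))) := by simp only [A.apply_symm_apply, Rt_U0_U]
    _ = 0 := by
      rw [hR, Rt_swap_pairs, Rt_of_forall_inl_eq_zero hs]
      simp [Fin.succ_ne_zero]

lemma apply_U0_inl_zero_ne_zero (hk : 0 < k) (hip : PreservesIp ε A) (hR : PreservesRt A) :
    A (U k 0) (Sum.inl 0) ≠ 0 := by
  intro hc
  have h := map_apply_inl_eq_zero hk hip.symm hR.symm
    (Fin.cases hc (apply_U0_inl_succ hk hip hR)) 0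
  simp at h

lemma apply_U0_S (hk : 0 < k) (hip : PreservesIp ε A) (hR : PreservesRt A) (j : Fin k) :
    A (U k 0) (Sum.inr (Sum.inr j)) = 0 := by
  have h := Rt_self_U_self_U (A (U k 0)) j
  rw [← A.apply_symm_apply (U k j.succ), hR, Rt_U0_left_U0] at h
  have hc := apply_U0_inl_zero_ne_zero hk hip hR
  simpa [hc] using h

lemma apply_U_mul_apply_S_of_ne (hk : 0 < k) (hip : PreservesIp ε A) (hR : PreservesRt A)
    {p q : Fin k} (hpq : p ≠ q) (j : Fin k) :
    A (U k p.succ) (Sum.inl j.succ) * A (S k q) (Sum.inr (Sum.inr j)) = 0 := by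
  have hS := map_apply_inl_eq_zero hk hip hR (s := S k q) (by simp)
  calc _ = Bf k j (A (U k p.succ)) (A (S k q)) := by simp [Bf, hS]
    _ = Rt k (A (U k p.succ)) (A (S k q)) (A (A.symm (U k 0)))
          (A (A.symm (U k j.succ))) := by simp only [A.apply_symm_apply, Rt_U0_U]
    _ = 0 := by
      rw [hR, Rt_swap_pairs, Rt_of_forall_inl_eq_zero (by simp)]
      simp [hpq.symm]

lemma apply_U0_mul_sum_apply_U_sq_mul_apply_S (hk : 0 < k) (hip : PreservesIp ε A)
    (hR : PreservesRt A) (p : Fin k) :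
    A (U k 0) (Sum.inl 0) *
      ∑ i, A (U k p.succ) (Sum.inl i.succ) ^ 2 * A (S k p) (Sum.inr (Sum.inr i)) = 1 := by
  have hS := map_apply_inl_eq_zero hk hip hR (s := S k p) (by simp)
  have h := hR (U k 0) (U k p.succ) (U k p.succ) (S k p)
  rw [Rt_of_forall_inl_eq_zero hS, Rt_of_forall_inl_eq_zero (by simp)] at h
  simp [Af, apply_U0_inl_succ hk hip hR, Fin.succ_ne_zero] at h
  rw [← h, Finset.mul_sum]
  exact Finset.sum_congr rfl fun _ _ => by ring

lemma sum_mul_apply_S_sq (hk : 0 < k) (hip : PreservesIp ε A) (hR : PreservesRt A) (p : Fin k) :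
    ∑ i, ε i * A (S k p) (Sum.inr (Sum.inr i)) ^ 2 = ε p := by
  have h := hip (S k p) (S k p)
  simp [ip, map_apply_inl_eq_zero hk hip hR (s := S k p) (by simp)] at h
  rw [← h]
  exact Finset.sum_congr rfl fun _ _ => by ring

lemma Af_apply_U_apply_U (hk : 0 < k) (hip : PreservesIp ε A) (hR : PreservesRt A)
    (i j m : Fin k) : Af k i (A (U k j.succ)) (A (U k m.succ)) = 0 := by
  have hs := map_apply_inl_eq_zero hk hip.symm hR.symm (s := S k i) (by simp)
  rw [← Rt_U_S, ← A.apply_symm_apply (U k i.succ), ← A.apply_symm_apply (S k i), hR,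
    Rt_of_forall_inl_eq_zero hs]
  simp [Af, (Fin.succ_ne_zero j).symm, (Fin.succ_ne_zero m).symm]

lemma exists_perm_apply_U (hk : 2 ≤ k) (hε : ∀ i, ε i = 1 ∨ ε i = -1)
    (hip : PreservesIp ε A) (hR : PreservesRt A) :
    ∃ ρ : Equiv.Perm (Fin k), ∀ j,
      A (U k j.succ) (Sum.inl 0) = 0 ∧
      (∀ i, i ≠ ρ j → A (U k j.succ) (Sum.inl i.succ) = 0) ∧
      A (U k 0) (Sum.inl 0) ^ 2 * A (U k j.succ) (Sum.inl (ρ j).succ) ^ 4 = 1 := by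
  have hk0 : 0 < k := by omega
  obtain ⟨ρ, hρ⟩ := exists_perm_monomial_of_mul_eq_zero
    (M := fun i j => A (U k j.succ) (Sum.inl i.succ))
    (N := fun i j => A (S k j) (Sum.inr (Sum.inr i))) (c := A (U k 0) (Sum.inl 0)) hε
    (fun hpq => apply_U_mul_apply_S_of_ne hk0 hip hR hpq)
    (apply_U0_mul_sum_apply_U_sq_mul_apply_S hk0 hip hR) (sum_mul_apply_S_sq hk0 hip hR)
  refine ⟨ρ, fun j => ⟨?_, (hρ j).1, (hρ j).2⟩⟩
  -- in `A_{ρ m}(A U_j, A U_m) = 0` with `m ≠ j` only `(A U_j)_{U_0} (A U_m)_{U_{ρ m}}` survives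
  have : Nontrivial (Fin k) := Fin.nontrivial_iff_two_le.2 hk
  obtain ⟨m, hm⟩ := exists_ne j
  have hq : A (U k m.succ) (Sum.inl (ρ m).succ) ≠ 0 := fun h => by simpa [h] using (hρ m).2
  have h := Af_apply_U_apply_U hk0 hip hR (ρ m) j m
  simp only [Af, (hρ j).1 _ (ρ.injective.ne hm), zero_mul, sub_zero] at h
  exact (mul_eq_zero.1 h).resolve_right hq

lemma multilinearMap_eq_sum_basis {ι : Type*} [Fintype ι] [DecidableEq ι]
    (T : MultilinearMap ℝ (fun _ : ι => Model k) ℝ) (x : ι → Model k) :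
    T x = ∑ v : ι → Idx k, (∏ s, x s (v s)) * T (fun s => e k (v s)) := by
  have hx : x = fun s => ∑ idx, x s idx • e k idx := by
    ext s i
    simp [e, Pi.single_apply]
  conv_lhs => rw [hx, T.map_sum]
  refine Finset.sum_congr rfl fun v _ => ?_
  rw [T.map_smul_univ, smul_eq_mul]

section Tuples

variable {ℓ : ℕ} {P Q : Model k} {m : Fin k}

lemma eq_of_goodTuple_of_tup_apply_ne_zero (hℓ : 0 < ℓ)
    (hPU : ∀ i : Fin k, P (Sum.inl i.succ) = 0) (hPS : ∀ i : Fin k, P (Sum.inr (Sum.inr i)) = 0)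
    (hQ0 : Q (Sum.inl 0) = 0) (hQU : ∀ i, i ≠ m → Q (Sum.inl i.succ) = 0)
    {v : Fin 4 ⊕ Fin ℓ → Idx k} (hv : goodTuple k ℓ v)
    (hne : ∀ s, tup k ℓ P Q Q P Q s (v s) ≠ 0) :
    v = Sum.elim ![Sum.inl 0, Sum.inl m.succ, Sum.inl m.succ, Sum.inl 0]
      (fun _ => Sum.inl m.succ) := by
  obtain ⟨j, π, h4 | h4, hlast⟩ := hv
  all_goals
    obtain rfl : j = m := by
      by_contra h
      exact hne (Sum.inr ⟨0, hℓ⟩) (by simp [tup, hlast, hQU j h])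
  · -- both `P`-slots would have to carry the single `U_0` of `(U_0, U_j, U_j, S_j)`
    have h0 := hne (Sum.inl 0)
    have h3 := hne (Sum.inl 3)
    have h03 : π 0 ≠ π 3 := π.injective.ne (by decide)
    rw [h4] at h0 h3
    generalize π 0 = a at h0 h03
    generalize π 3 = b at h3 h03
    fin_cases a <;> fin_cases b <;> simp_all [tS, tup]
  · funext s
    rcases s with t | t
    · have h := hne (Sum.inl t)
      rw [h4 t] at h ⊢
      generalize π t = a at h ⊢
      fin_cases t <;> fin_cases a <;> simp_all [tU, tup]
    · simp [hlast]

lemma map_tup_eq (hℓ : 0 < ℓ) (T : MultilinearMap ℝ (fun _ : Fin 4 ⊕ Fin ℓ => Model k) ℝ)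
    (hT : ∀ v, ¬ goodTuple k ℓ v → T (fun s => e k (v s)) = 0)
    (hPU : ∀ i : Fin k, P (Sum.inl i.succ) = 0) (hPS : ∀ i : Fin k, P (Sum.inr (Sum.inr i)) = 0)
    (hQ0 : Q (Sum.inl 0) = 0) (hQU : ∀ i, i ≠ m → Q (Sum.inl i.succ) = 0) :
    T (tup k ℓ P Q Q P Q) = P (Sum.inl 0) ^ 2 * Q (Sum.inl m.succ) ^ (ℓ + 2) *
      T (tup k ℓ (U k 0) (U k m.succ) (U k m.succ) (U k 0) (U k m.succ)) := by
  rw [multilinearMap_eq_sum_basis, Fintype.sum_eq_single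
    (Sum.elim ![Sum.inl 0, Sum.inl m.succ, Sum.inl m.succ, Sum.inl 0] fun _ => Sum.inl m.succ)]
  · congr 1
    · rw [Fintype.prod_sum_type, Fin.prod_univ_four]
      simp [tup]
      ring
    · congr 1
      funext s
      rcases s with t | t
      · fin_cases t <;> rfl
      · rfl
  · intro v hv
    by_cases hg : goodTuple k ℓ v
    · obtain ⟨s, hs⟩ : ∃ s, tup k ℓ P Q Q P Q s (v s) = 0 := by
        by_contra! h
        exact hv (eq_of_goodTuple_of_tup_apply_ne_zero hℓ hPU hPS hQ0 hQU hg h)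
      rw [Finset.prod_eq_zero (Finset.mem_univ s) hs, zero_mul]
    · rw [hT v hg, mul_zero]

end Tuples

end ZeroModel

open ZeroModel

theorem gamma_is_model_invariant (k ℓ : ℕ) (hk : 2 ≤ k) (hℓ : 2 ≤ ℓ)
    (ε : Fin k → ℝ) (hε : ∀ i, ε i = 1 ∨ ε i = -1)
    (T₁ : MultilinearMap ℝ (fun _ : Fin 4 ⊕ Fin 1 => Model k) ℝ)
    (Tℓ : MultilinearMap ℝ (fun _ : Fin 4 ⊕ Fin ℓ => Model k) ℝ)
    (hT₁ : ∀ v : Fin 4 ⊕ Fin 1 → Idx k, ¬ goodTuple k 1 v → T₁ (fun m => e k (v m)) = 0)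
    (hTℓ : ∀ v : Fin 4 ⊕ Fin ℓ → Idx k, ¬ goodTuple k ℓ v → Tℓ (fun m => e k (v m)) = 0)
    (A : Model k ≃ₗ[ℝ] Model k)
    (hAip : ∀ x y, ip k ε (A x) (A y) = ip k ε x y)
    (hAR : ∀ x y z w, Rt k (A x) (A y) (A z) (A w) = Rt k x y z w) :
    ∑ j : Fin k,
        Tℓ (tup k ℓ (A (U k 0)) (A (U k j.succ)) (A (U k j.succ)) (A (U k 0))
            (A (U k j.succ)))
          * (T₁ (tup k 1 (A (U k 0)) (A (U k j.succ)) (A (U k j.succ)) (A (U k 0))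
              (A (U k j.succ)))) ^ (ℓ - 2)
      = ∑ j : Fin k,
          Tℓ (tup k ℓ (U k 0) (U k j.succ) (U k j.succ) (U k 0) (U k j.succ))
            * (T₁ (tup k 1 (U k 0) (U k j.succ) (U k j.succ) (U k 0) (U k j.succ))) ^ (ℓ - 2) := by
  obtain ⟨n, rfl⟩ : ∃ n, ℓ = n + 2 := ⟨ℓ - 2, by omega⟩
  have hk0 : 0 < k := by omega
  have hPU := apply_U0_inl_succ hk0 hAip hAR
  have hPS := apply_U0_S hk0 hAip hAR
  obtain ⟨ρ, hρ⟩ := exists_perm_apply_U hk hε hAip hAR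
  refine Eq.trans (Finset.sum_congr rfl fun j _ => ?_) (Equiv.sum_comp ρ _)
  obtain ⟨hQ0, hQU, hpow⟩ := hρ j
  rw [map_tup_eq (by omega) Tℓ hTℓ hPU hPS hQ0 hQU, map_tup_eq one_pos T₁ hT₁ hPU hPS hQ0 hQU,
    Nat.add_sub_cancel]
  calc _ = (A (U k 0) (Sum.inl 0) ^ 2 * A (U k j.succ) (Sum.inl (ρ j).succ) ^ 4) ^ (n + 1) *
        (Tℓ (tup k (n + 2) (U k 0) (U k (ρ j).succ) (U k (ρ j).succ) (U k 0) (U k (ρ j).succ)) *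
          T₁ (tup k 1 (U k 0) (U k (ρ j).succ) (U k (ρ j).succ) (U k 0) (U k (ρ j).succ)) ^ n) := by
        ring
    _ = _ := by rw [hpow, one_pow, one_mul]
end
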